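/- arXiv:2504.16241 — 10 statements merged into one kernel-verified Lean document; each statement's English description precedes it below -/
import Mathlib

section
/- Let R be a commutative ring and A an R-algebra that is free of rank 2 as an R-module. Then there exist elements a, b ∈ R and an R-algebra isomorphism A ≅ R[x]/⟨x² + ax + b⟩. -/
open Polynomial

/-- Any `R`-algebra that is free of rank 2 over `R` is isomorphic as an `R`-algebra to
`R[x]/⟨x² + ax + b⟩` for some `a, b ∈ R`. -/
theorem stmt_2 (R A : Type*) [CommRing R] [CommRing A] [Algebra R A]
    (basis : Module.Basis (Fin 2) R A) :
    ∃ a b : R, Nonempty (A ≃ₐ[R] AdjoinRoot (X ^ 2 + C a * X + C b)) := by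
  classical
  set e0 := basis 0 with he0
  set e1 := basis 1 with he1
  set c0 : R := basis.repr 1 0 with hc0
  set c1 : R := basis.repr 1 1 with hc1
  have hone : c0 • e0 + c1 • e1 = 1 := by
    have := basis.sum_repr 1
    rw [Fin.sum_univ_two] at this; exact this
  -- unimodularity
  set u : R := basis.repr (e0 * e0) 0 with hu
  set v : R := basis.repr (e1 * e0) 0 with hv
  have huni : u * c0 + v * c1 = 1 := by
    have h : e0 = c0 • (e0 * e0) + c1 • (e1 * e0) := by
      calc e0 = (c0 • e0 + c1 • e1) * e0 := by rw [hone, one_mul]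
        _ = c0 • (e0 * e0) + c1 • (e1 * e0) := by
            rw [add_mul, smul_mul_assoc, smul_mul_assoc]
    have h2 := congrArg (fun z => basis.repr z 0) h
    simp only [map_add, map_smul, Finsupp.add_apply, Finsupp.smul_apply,
      smul_eq_mul] at h2
    rw [he0, basis.repr_self] at h2
    simp only [Finsupp.single_eq_same] at h2
    rw [← hu, ← hv] at h2
    linear_combination -h2
  -- new basis (1, θ)
  set θ : A := (-v) • e0 + u • e1 with hθ
  set M : Matrix (Fin 2) (Fin 2) R := !![c0, -v; c1, u] with hM
  set N : Matrix (Fin 2) (Fin 2) R := !![u, v; -c1, c0] with hN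
  have hMN : M * N = 1 := by
    ext i j
    fin_cases i <;> fin_cases j <;>
      simp [hM, hN, Matrix.mul_apply, Fin.sum_univ_two] <;> first | ring1 | linear_combination huni
  have hNM : N * M = 1 := by
    ext i j
    fin_cases i <;> fin_cases j <;>
      simp [hM, hN, Matrix.mul_apply, Fin.sum_univ_two] <;> first | ring1 | linear_combination huni
  let g : (Fin 2 → R) ≃ₗ[R] (Fin 2 → R) :=
    LinearEquiv.ofLinear (Matrix.toLin' N) (Matrix.toLin' M)
      (by rw [← Matrix.toLin'_mul, hNM, Matrix.toLin'_one])
      (by rw [← Matrix.toLin'_mul, hMN, Matrix.toLin'_one])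
  let b2 : Module.Basis (Fin 2) R A := Module.Basis.ofEquivFun (basis.equivFun ≪≫ₗ g)
  have hb2 : ∀ i, b2 i = basis.equivFun.symm (M.mulVec (Pi.single i 1)) := by
    intro i
    simp [b2, Module.Basis.coe_ofEquivFun, g, Matrix.toLin'_apply]
  have hb20 : b2 0 = 1 := by
    rw [hb2]
    have : M.mulVec (Pi.single 0 1) = ![c0, c1] := by
      funext i; fin_cases i <;>
        simp [hM, Matrix.mulVec, dotProduct, Fin.sum_univ_two]
    rw [this]
    rw [Module.Basis.equivFun_symm_apply]
    simpa [Fin.sum_univ_two] using hone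
  have hb21 : b2 1 = θ := by
    rw [hb2]
    have : M.mulVec (Pi.single 1 1) = ![-v, u] := by
      funext i; fin_cases i <;>
        simp [hM, Matrix.mulVec, dotProduct, Fin.sum_univ_two]
    rw [this, Module.Basis.equivFun_symm_apply]
    simp [hθ, Fin.sum_univ_two]; rfl
  -- quadratic relation
  set r0 : R := b2.repr (θ * θ) 0 with hr0
  set r1 : R := b2.repr (θ * θ) 1 with hr1
  have hrel : θ * θ = r0 • (1 : A) + r1 • θ := by
    conv_lhs => rw [← b2.sum_repr (θ * θ)]
    rw [Fin.sum_univ_two, hb20, hb21, ← hr0, ← hr1]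
  refine ⟨-r1, -r0, ?_⟩
  set f : R[X] := X ^ 2 + C (-r1) * X + C (-r0) with hf
  have hfm : f.Monic := by
    rw [hf]; monicity!
  have haev : aeval θ f = 0 := by
    rw [hf]
    simp only [map_add, map_mul, map_pow, aeval_X, aeval_C]
    rw [Algebra.smul_def, Algebra.smul_def, ← hb20] at hrel
    rw [sq]
    rw [hrel, hb20]
    simp [mul_one]
  set φ : AdjoinRoot f →ₐ[R] A := AdjoinRoot.liftAlgHom f (Algebra.ofId R A) θ (by rw [← haev]; rfl) with hφ
  have hsurj : Function.Surjective φ := by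
    intro z
    refine ⟨algebraMap R _ (b2.repr z 0) + (b2.repr z 1) • AdjoinRoot.root f, ?_⟩
    rw [map_add, map_smul, AlgHom.commutes, hφ, AdjoinRoot.liftAlgHom_root]
    conv_rhs => rw [← b2.sum_repr z]
    rw [Fin.sum_univ_two, hb20, hb21]
    simp [Algebra.smul_def]
  have hinj : Function.Injective φ := by
    rw [injective_iff_map_eq_zero]
    intro x hx
    obtain ⟨p, rfl⟩ := AdjoinRoot.mk_surjective x
    set q : R[X] := p %ₘ f with hq
    have hmk : AdjoinRoot.mk f p = AdjoinRoot.mk f q := by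
      rw [AdjoinRoot.mk_eq_mk, hq]
      have h' : p - p %ₘ f = f * (p /ₘ f) := by
        rw [modByMonic_eq_sub_mul_div p f]; ring
      rw [h']
      exact dvd_mul_right _ _
    rcases subsingleton_or_nontrivial R with hR | hR
    · have : Subsingleton R[X] := inferInstance
      have : Subsingleton (AdjoinRoot f) :=
        Function.Surjective.subsingleton (fun y => AdjoinRoot.mk_surjective y)
      exact Subsingleton.elim _ _
    · have hdeg : q.degree ≤ 1 := by
        have h2 : q.degree < f.degree := degree_modByMonic_lt p hfm
        have hdf : f.degree = 2 := by rw [hf]; compute_degree!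
        rw [hdf] at h2
        exact Order.le_of_lt_succ (by exact_mod_cast h2)
      have hqeq : q = C (q.coeff 1) * X + C (q.coeff 0) :=
        eq_X_add_C_of_degree_le_one hdeg
      have hφq : q.coeff 0 • (1 : A) + q.coeff 1 • θ = 0 := by
        have : φ (AdjoinRoot.mk f q) = 0 := by rw [← hmk]; exact hx
        rw [hφ, AdjoinRoot.liftAlgHom_mk] at this
        change aeval θ q = 0 at this
        conv at this => rw [hqeq]
        simp only [map_add, map_mul, aeval_C, aeval_X] at this
        rw [Algebra.smul_def, Algebra.smul_def, mul_one]
        linear_combination this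
      have hco : ∀ i : Fin 2, b2.repr (q.coeff 0 • (1 : A) + q.coeff 1 • θ) i = 0 := by
        intro i; rw [hφq]; simp
      have h0 := hco 0
      have h1 := hco 1
      rw [← hb20, ← hb21, map_add, map_smul, map_smul] at h0 h1
      simp only [Finsupp.add_apply, Finsupp.smul_apply, b2.repr_self,
        Finsupp.single_apply, smul_eq_mul] at h0 h1
      norm_num at h0 h1
      have hq0 : q = 0 := by rw [hqeq, h0, h1]; simp
      rw [hmk, hq0, map_zero]
  exact ⟨AlgEquiv.ofBijective φ ⟨hinj, hsurj⟩ |>.symm⟩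
end

section
/- Let R be a commutative ring, a, b ∈ R, and A = R[x]/⟨x² + ax + b⟩. Then the following are equivalent: (1) there exists c ∈ R with an R-algebra isomorphism A ≅ R[x]/⟨x² + c⟩; (2) there exists v ∈ R such that a = 2v. Moreover, if a = 2v then there is an R-algebra isomorphism A ≅ R[x]/⟨x² + (b − v²)⟩ sending the class of x in the target to x̄ + v, where x̄ denotes the class of x in A. -/
open Polynomial

lemma stmt3_coords_aux {R : Type*} [CommRing R] {f : R[X]} (hf : f.Monic)
    (hdeg : f.natDegree = 2) (z : AdjoinRoot f) :
    ∃ p q : R, z = algebraMap R (AdjoinRoot f) p + algebraMap R (AdjoinRoot f) q *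
      AdjoinRoot.root f := by
  let pb := AdjoinRoot.powerBasis' hf
  have hdim : pb.dim = 2 := by simpa [pb] using hdeg
  let bB := pb.basis.reindex (finCongr hdim)
  have hb : ∀ i : Fin 2, bB i = AdjoinRoot.root f ^ (i : ℕ) := by
    intro i
    simp only [bB, Module.Basis.reindex_apply, PowerBasis.coe_basis]
    simp [pb]
  refine ⟨bB.repr z 0, bB.repr z 1, ?_⟩
  have h := bB.sum_repr z
  rw [Fin.sum_univ_two, hb 0, hb 1] at h
  simpa [Algebra.smul_def] using h.symm

lemma stmt3_unique_aux {R : Type*} [CommRing R] {f : R[X]} (hf : f.Monic)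
    (hdeg : f.natDegree = 2) (p q : R)
    (h : algebraMap R (AdjoinRoot f) p + algebraMap R (AdjoinRoot f) q *
      AdjoinRoot.root f = 0) : p = 0 ∧ q = 0 := by
  let pb := AdjoinRoot.powerBasis' hf
  have hdim : pb.dim = 2 := by simpa [pb] using hdeg
  let bB := pb.basis.reindex (finCongr hdim)
  have hb : ∀ i : Fin 2, bB i = AdjoinRoot.root f ^ (i : ℕ) := by
    intro i
    simp only [bB, Module.Basis.reindex_apply, PowerBasis.coe_basis]
    simp [pb]
  have h' : p • bB 0 + q • bB 1 = 0 := by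
    rw [hb 0, hb 1]
    simpa [Algebra.smul_def] using h
  have h0 := congrArg (fun z => bB.repr z 0) h'
  have h1 := congrArg (fun z => bB.repr z 1) h'
  simp [Module.Basis.repr_self, Finsupp.single_apply] at h0 h1
  exact ⟨h0, h1⟩

lemma stmt3_root_rel {R : Type*} [CommRing R] (a b : R) :
    AdjoinRoot.root (X ^ 2 + C a * X + C b) ^ 2
      + algebraMap R _ a * AdjoinRoot.root (X ^ 2 + C a * X + C b)
      + algebraMap R _ b = 0 := by
  have h := AdjoinRoot.mk_self (f := X ^ 2 + C a * X + C b)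
  simpa [map_add, map_mul, map_pow, AdjoinRoot.mk_X, AdjoinRoot.mk_C,
    AdjoinRoot.algebraMap_eq] using h

lemma stmt3_root_rel2 {R : Type*} [CommRing R] (c : R) :
    AdjoinRoot.root ((X : R[X]) ^ 2 + C c) ^ 2 + algebraMap R _ c = 0 := by
  have h := AdjoinRoot.mk_self (f := (X : R[X]) ^ 2 + C c)
  simpa [map_add, map_pow, AdjoinRoot.mk_X, AdjoinRoot.mk_C,
    AdjoinRoot.algebraMap_eq] using h

lemma stmt3_shift_equiv {R : Type*} [CommRing R] (a b v : R) (hv : a = 2 * v) :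
    ∃ e : AdjoinRoot ((X : R[X]) ^ 2 + C (b - v ^ 2)) ≃ₐ[R]
        AdjoinRoot (X ^ 2 + C a * X + C b),
      e (AdjoinRoot.root _) =
        AdjoinRoot.root _ + algebraMap R (AdjoinRoot (X ^ 2 + C a * X + C b)) v := by
  have hA := stmt3_root_rel a b
  have hB := stmt3_root_rel2 (b - v ^ 2) (R := R)
  have h2vA : algebraMap R (AdjoinRoot (X ^ 2 + C a * X + C b)) a
      = 2 * algebraMap R (AdjoinRoot (X ^ 2 + C a * X + C b)) v := by
    have h := congrArg (algebraMap R (AdjoinRoot (X ^ 2 + C a * X + C b))) hv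
    rw [map_mul, map_ofNat] at h
    exact h
  have h2vB : algebraMap R (AdjoinRoot ((X : R[X]) ^ 2 + C (b - v ^ 2))) a
      = 2 * algebraMap R (AdjoinRoot ((X : R[X]) ^ 2 + C (b - v ^ 2))) v := by
    have h := congrArg (algebraMap R (AdjoinRoot ((X : R[X]) ^ 2 + C (b - v ^ 2)))) hv
    rw [map_mul, map_ofNat] at h
    exact h
  have h1 : aeval (AdjoinRoot.root (X ^ 2 + C a * X + C b)
        + algebraMap R (AdjoinRoot (X ^ 2 + C a * X + C b)) v)
      ((X : R[X]) ^ 2 + C (b - v ^ 2)) = 0 := by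
    simp only [map_add, map_pow, aeval_X, aeval_C, map_sub, map_mul]
    linear_combination hA - AdjoinRoot.root (X ^ 2 + C a * X + C b) * h2vA
  have h2 : aeval (AdjoinRoot.root ((X : R[X]) ^ 2 + C (b - v ^ 2))
        - algebraMap R (AdjoinRoot ((X : R[X]) ^ 2 + C (b - v ^ 2))) v)
      ((X : R[X]) ^ 2 + C a * X + C b) = 0 := by
    simp only [map_add, map_pow, map_mul, aeval_X, aeval_C]
    simp only [map_sub, map_pow] at hB
    linear_combination hB + (AdjoinRoot.root ((X : R[X]) ^ 2 + C (b - v ^ 2))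
      - algebraMap R (AdjoinRoot ((X : R[X]) ^ 2 + C (b - v ^ 2))) v) * h2vB
  refine ⟨AlgEquiv.ofAlgHom (AdjoinRoot.liftAlgHom _ (Algebra.ofId R _) _ (by rw [Algebra.toRingHom_ofId, ← aeval_def]; exact h1)) (AdjoinRoot.liftAlgHom _ (Algebra.ofId R _) _ (by rw [Algebra.toRingHom_ofId, ← aeval_def]; exact h2)) ?_ ?_, ?_⟩
  · apply AdjoinRoot.algHom_ext
    rw [AlgHom.comp_apply, AdjoinRoot.liftAlgHom_root, map_sub, AdjoinRoot.liftAlgHom_root,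
      AlgHom.commutes, AlgHom.id_apply, add_sub_cancel_right]
  · apply AdjoinRoot.algHom_ext
    rw [AlgHom.comp_apply, AdjoinRoot.liftAlgHom_root, map_add, AdjoinRoot.liftAlgHom_root,
      AlgHom.commutes, AlgHom.id_apply, sub_add_cancel]
  · rw [AlgEquiv.ofAlgHom_apply, AdjoinRoot.liftAlgHom_root]

/-- Let `A = R[x]/⟨x² + ax + b⟩`. Then `A` is isomorphic to `R[x]/⟨x² + c⟩` for some
`c ∈ R` iff `a = 2v` for some `v ∈ R`; and if `a = 2v`, there is an `R`-algebra
isomorphism `R[x]/⟨x² + (b − v²)⟩ ≅ A` sending the class of `x` to `x̄ + v`. -/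
theorem stmt_3 (R : Type*) [CommRing R] (a b : R) :
    ((∃ c : R,
        Nonempty (AdjoinRoot (X ^ 2 + C a * X + C b) ≃ₐ[R] AdjoinRoot ((X : R[X]) ^ 2 + C c))) ↔
      ∃ v : R, a = 2 * v) ∧
    (∀ v : R, a = 2 * v →
      ∃ e : AdjoinRoot ((X : R[X]) ^ 2 + C (b - v ^ 2)) ≃ₐ[R]
          AdjoinRoot (X ^ 2 + C a * X + C b),
        e (AdjoinRoot.root _) =
          AdjoinRoot.root _ + algebraMap R (AdjoinRoot (X ^ 2 + C a * X + C b)) v) := by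
  constructor
  · constructor
    · rintro ⟨c, ⟨e⟩⟩
      by_cases hR : Subsingleton R
      · exact ⟨0, Subsingleton.elim _ _⟩
      have : Nontrivial R := not_subsingleton_iff_nontrivial.mp hR
      have hf : ((X : R[X]) ^ 2 + C c).Monic := by monicity!
      have hg : ((X : R[X]) ^ 2 + C a * X + C b).Monic := by monicity!
      have hfd : ((X : R[X]) ^ 2 + C c).natDegree = 2 := by compute_degree!
      have hgd : ((X : R[X]) ^ 2 + C a * X + C b).natDegree = 2 := by compute_degree!
      obtain ⟨p, q, hpq⟩ := stmt3_coords_aux hf hfd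
        (e (AdjoinRoot.root (X ^ 2 + C a * X + C b)))
      obtain ⟨s, t, hst⟩ := stmt3_coords_aux hg hgd
        (e.symm (AdjoinRoot.root ((X : R[X]) ^ 2 + C c)))
      -- relation satisfied by Y := e (root g)
      have hy : e (AdjoinRoot.root (X ^ 2 + C a * X + C b)) ^ 2
          + algebraMap R (AdjoinRoot ((X : R[X]) ^ 2 + C c)) a
            * e (AdjoinRoot.root (X ^ 2 + C a * X + C b))
          + algebraMap R (AdjoinRoot ((X : R[X]) ^ 2 + C c)) b = 0 := by
        have h := congrArg e (stmt3_root_rel a b (R := R))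
        simp only [map_add, map_mul, map_pow, map_zero, AlgEquiv.commutes] at h
        exact h
      have hx2 : AdjoinRoot.root ((X : R[X]) ^ 2 + C c) ^ 2
          = -algebraMap R (AdjoinRoot ((X : R[X]) ^ 2 + C c)) c := by
        linear_combination stmt3_root_rel2 c (R := R)
      have hX : AdjoinRoot.root ((X : R[X]) ^ 2 + C c)
          = algebraMap R (AdjoinRoot ((X : R[X]) ^ 2 + C c)) s
            + algebraMap R (AdjoinRoot ((X : R[X]) ^ 2 + C c)) t
              * e (AdjoinRoot.root (X ^ 2 + C a * X + C b)) := by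
        have h := congrArg e hst
        simp only [map_add, map_mul, AlgEquiv.commutes, AlgEquiv.apply_symm_apply] at h
        exact h
      have h1 : algebraMap R (AdjoinRoot ((X : R[X]) ^ 2 + C c)) (s + t * p)
          + algebraMap R (AdjoinRoot ((X : R[X]) ^ 2 + C c)) (t * q - 1)
            * AdjoinRoot.root ((X : R[X]) ^ 2 + C c) = 0 := by
        simp only [map_add, map_mul, map_sub, map_one]
        linear_combination -hX - (algebraMap R (AdjoinRoot ((X : R[X]) ^ 2 + C c)) t) * hpq
      have h2 : algebraMap R (AdjoinRoot ((X : R[X]) ^ 2 + C c)) (p ^ 2 - q ^ 2 * c + a * p + b)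
          + algebraMap R (AdjoinRoot ((X : R[X]) ^ 2 + C c)) (2 * p * q + a * q)
            * AdjoinRoot.root ((X : R[X]) ^ 2 + C c) = 0 := by
        simp only [map_add, map_mul, map_sub, map_pow, map_ofNat]
        linear_combination hy - (e (AdjoinRoot.root (X ^ 2 + C a * X + C b))
          + algebraMap R (AdjoinRoot ((X : R[X]) ^ 2 + C c)) p
          + algebraMap R (AdjoinRoot ((X : R[X]) ^ 2 + C c)) q
            * AdjoinRoot.root ((X : R[X]) ^ 2 + C c)
          + algebraMap R (AdjoinRoot ((X : R[X]) ^ 2 + C c)) a) * hpq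
          - (algebraMap R (AdjoinRoot ((X : R[X]) ^ 2 + C c)) q) ^ 2 * hx2
      have htq : t * q - 1 = 0 := (stmt3_unique_aux hf hfd _ _ h1).2
      have hq : 2 * p * q + a * q = 0 := (stmt3_unique_aux hf hfd _ _ h2).2
      exact ⟨-p, by linear_combination t * hq - (2 * p + a) * htq⟩
    · rintro ⟨v, hv⟩
      obtain ⟨e, -⟩ := stmt3_shift_equiv a b v hv
      exact ⟨b - v ^ 2, ⟨e.symm⟩⟩
  · exact fun v hv => stmt3_shift_equiv a b v hv
end

section
/- Let R be a commutative ring, a, b ∈ R, and A = R[x]/⟨x² + ax + b⟩. Then the following are equivalent: (1) there exists c ∈ R with an R-algebra isomorphism A ≅ R[x]/⟨x² − x + c⟩; (2) there exists v ∈ R such that 2v + a is a unit in R. -/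
open Polynomial

section helpers

variable {R : Type*} [CommRing R]

private lemma as_lt_two_le_one {d : WithBot ℕ} (h : d < 2) : d ≤ 1 := by
  induction d using WithBot.recBotCoe with
  | bot => exact bot_le
  | coe n =>
    have h2 : n < 2 := WithBot.coe_lt_coe.mp h
    exact WithBot.coe_le_coe.mpr (by omega)

private lemma as_mk_lin (g : R[X]) (p q : R) :
    AdjoinRoot.mk g (C q * X + C p) =
      algebraMap R _ p + algebraMap R _ q * AdjoinRoot.root g := by
  simp only [map_add, map_mul, AdjoinRoot.mk_C, AdjoinRoot.mk_X, AdjoinRoot.algebraMap_eq]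
  ring

private lemma as_monic_nd [Nontrivial R] {p : R[X]} (hp : p.degree < 2) :
    (X ^ 2 + p).Monic ∧ (X ^ 2 + p).natDegree = 2 := by
  have hm : (X ^ 2 + p).Monic := Polynomial.monic_X_pow_add (n := 2) (by exact_mod_cast hp)
  refine ⟨hm, ?_⟩
  have hd : (X ^ 2 + p).degree = ((2 : ℕ) : WithBot ℕ) := by
    rw [Polynomial.degree_add_eq_left_of_degree_lt, Polynomial.degree_X_pow]
    rw [Polynomial.degree_X_pow]
    exact_mod_cast hp
  exact Polynomial.natDegree_eq_of_degree_eq_some hd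

private lemma as_repr_exists {g : R[X]} (hg : g.Monic) (hdeg : g.natDegree = 2)
    (z : AdjoinRoot g) :
    ∃ p q : R, z = algebraMap R _ p + algebraMap R _ q * AdjoinRoot.root g := by
  cases subsingleton_or_nontrivial R
  · have : Subsingleton (AdjoinRoot g) := Module.subsingleton R _
    exact ⟨0, 0, Subsingleton.elim _ _⟩
  obtain ⟨f, rfl⟩ := AdjoinRoot.mk_surjective z
  refine ⟨(f %ₘ g).coeff 0, (f %ₘ g).coeff 1, ?_⟩
  have h1 : AdjoinRoot.mk g f = AdjoinRoot.mk g (f %ₘ g) := by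
    rw [AdjoinRoot.mk_eq_mk]
    exact ⟨f /ₘ g, by linear_combination (Polynomial.modByMonic_add_div f g).symm⟩
  have h2 : f %ₘ g = C ((f %ₘ g).coeff 1) * X + C ((f %ₘ g).coeff 0) := by
    apply Polynomial.eq_X_add_C_of_degree_le_one
    apply as_lt_two_le_one
    have h3 := Polynomial.degree_modByMonic_lt f hg
    have hdg : g.degree = 2 := by
      rw [Polynomial.degree_eq_natDegree hg.ne_zero, hdeg]; rfl
    rwa [hdg] at h3
  rw [h1]
  conv_lhs => rw [h2]
  exact as_mk_lin g _ _

private lemma as_repr_unique {g : R[X]} (hg : g.Monic) (hdeg : g.natDegree = 2)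
    {p q : R} (h : algebraMap R _ p + algebraMap R _ q * AdjoinRoot.root g = 0) :
    p = 0 ∧ q = 0 := by
  cases subsingleton_or_nontrivial R
  · exact ⟨Subsingleton.elim _ _, Subsingleton.elim _ _⟩
  have hmk : AdjoinRoot.mk g (C q * X + C p) = 0 := by rw [as_mk_lin]; exact h
  rw [AdjoinRoot.mk_eq_zero] at hmk
  have h0 : C q * X + C p = 0 := by
    by_contra hne
    obtain ⟨k, hk⟩ := hmk
    have hk0 : k ≠ 0 := by rintro rfl; simp at hk; exact hne hk
    have hdg : g.degree = 2 := by
      rw [Polynomial.degree_eq_natDegree hg.ne_zero, hdeg]; rfl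
    have h1 : (C q * X + C p).degree ≤ 1 := Polynomial.degree_linear_le
    have h2 : (2 : WithBot ℕ) ≤ (C q * X + C p).degree := by
      rw [hk, mul_comm g k, hg.degree_mul, hdg]
      have hk2 : (0 : WithBot ℕ) ≤ k.degree := Polynomial.zero_le_degree_iff.mpr hk0
      calc (2 : WithBot ℕ) = 0 + 2 := by rw [zero_add]
        _ ≤ k.degree + 2 := add_le_add_left hk2 2
    exact absurd (h2.trans h1) (by decide)
  constructor
  · have := congrArg (fun r => Polynomial.coeff r 0) h0; simpa using this
  · have := congrArg (fun r => Polynomial.coeff r 1) h0; simpa using this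

private lemma as_repr_unique' {g : R[X]} (hg : g.Monic) (hdeg : g.natDegree = 2)
    {p q p' q' : R}
    (h : algebraMap R _ p + algebraMap R _ q * AdjoinRoot.root g =
         algebraMap R _ p' + algebraMap R _ q' * AdjoinRoot.root g) :
    p = p' ∧ q = q' := by
  have h0 : algebraMap R _ (p - p') + algebraMap R _ (q - q') * AdjoinRoot.root g = 0 := by
    rw [map_sub, map_sub]
    linear_combination h
  obtain ⟨h1, h2⟩ := as_repr_unique hg hdeg h0
  exact ⟨sub_eq_zero.mp h1, sub_eq_zero.mp h2⟩

end helpers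

/-- Let `A = R[x]/⟨x² + ax + b⟩`. Then `A` is isomorphic to `R[x]/⟨x² − x + c⟩` for some
`c ∈ R` iff there exists `v ∈ R` such that `2v + a` is a unit in `R`. -/
theorem stmt_4 (R : Type*) [CommRing R] (a b : R) :
    (∃ c : R,
        Nonempty (AdjoinRoot (X ^ 2 + C a * X + C b) ≃ₐ[R]
          AdjoinRoot ((X : R[X]) ^ 2 - X + C c))) ↔
      ∃ v : R, IsUnit (2 * v + a) := by
  rcases subsingleton_or_nontrivial R with hR | hR
  · constructor
    · intro _
      exact ⟨0, isUnit_of_subsingleton _⟩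
    · intro _
      refine ⟨0, ⟨?_⟩⟩
      have h1 : Subsingleton (AdjoinRoot ((X : R[X]) ^ 2 + C a * X + C b)) :=
        Module.subsingleton R _
      have h2 : Subsingleton (AdjoinRoot ((X : R[X]) ^ 2 - X + C (0 : R))) :=
        Module.subsingleton R _
      exact AlgEquiv.ofAlgHom (AdjoinRoot.liftAlgHom _ (Algebra.ofId R _) 0 (Subsingleton.elim _ _))
        (AdjoinRoot.liftAlgHom _ (Algebra.ofId R _) 0 (Subsingleton.elim _ _))
        (AlgHom.ext fun x => Subsingleton.elim _ _)
        (AlgHom.ext fun x => Subsingleton.elim _ _)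
  have hfeq : (X : R[X]) ^ 2 + C a * X + C b = X ^ 2 + (C a * X + C b) := add_assoc _ _ _
  have hfm : ((X : R[X]) ^ 2 + C a * X + C b).Monic := by
    rw [hfeq]; exact (as_monic_nd Polynomial.degree_linear_lt).1
  have hfd : ((X : R[X]) ^ 2 + C a * X + C b).natDegree = 2 := by
    rw [hfeq]; exact (as_monic_nd Polynomial.degree_linear_lt).2
  have hxrel : (AdjoinRoot.root ((X : R[X]) ^ 2 + C a * X + C b)) ^ 2 +
      algebraMap R _ a * AdjoinRoot.root _ + algebraMap R _ b = 0 := by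
    have h := AdjoinRoot.mk_self (f := (X : R[X]) ^ 2 + C a * X + C b)
    simpa only [map_add, map_mul, map_pow, AdjoinRoot.mk_X, AdjoinRoot.mk_C,
      AdjoinRoot.algebraMap_eq] using h
  have hgaux : ∀ c : R, ((X : R[X]) ^ 2 - X + C c).Monic ∧
      ((X : R[X]) ^ 2 - X + C c).natDegree = 2 := by
    intro c
    have hgeq : (X : R[X]) ^ 2 - X + C c = X ^ 2 + (-X + C c) := by ring
    have hdeg : ((-X : R[X]) + C c).degree < 2 := by
      apply lt_of_le_of_lt (Polynomial.degree_add_le _ _)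
      rw [Polynomial.degree_neg, Polynomial.degree_X]
      exact max_lt (by decide) (lt_of_le_of_lt Polynomial.degree_C_le (by decide))
    rw [hgeq]
    exact as_monic_nd hdeg
  have hyrel : ∀ c : R, (AdjoinRoot.root ((X : R[X]) ^ 2 - X + C c)) ^ 2 =
      AdjoinRoot.root _ - algebraMap R _ c := by
    intro c
    have h := AdjoinRoot.mk_self (f := (X : R[X]) ^ 2 - X + C c)
    have h2 : (AdjoinRoot.root ((X : R[X]) ^ 2 - X + C c)) ^ 2 -
        AdjoinRoot.root _ + algebraMap R _ c = 0 := by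
      simpa only [map_add, map_sub, map_pow, AdjoinRoot.mk_X, AdjoinRoot.mk_C,
        AdjoinRoot.algebraMap_eq] using h
    linear_combination h2
  constructor
  · rintro ⟨c, ⟨φ⟩⟩
    obtain ⟨hgm, hgd⟩ := hgaux c
    have hy := hyrel c
    have herel : (φ (AdjoinRoot.root _)) ^ 2 + algebraMap R _ a * φ (AdjoinRoot.root _) +
        algebraMap R _ b = 0 := by
      have := congrArg φ hxrel
      simpa only [map_add, map_mul, map_pow, map_zero, AlgEquiv.commutes] using this
    obtain ⟨r, s, hrs⟩ := as_repr_exists hgm hgd (φ (AdjoinRoot.root _))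
    obtain ⟨p, q, hpq⟩ := as_repr_exists hfm hfd (φ.symm (AdjoinRoot.root _))
    have hqy : AdjoinRoot.root ((X : R[X]) ^ 2 - X + C c) =
        algebraMap R _ (p + q * r) + algebraMap R _ (q * s) * AdjoinRoot.root _ := by
      have h1 := congrArg φ hpq
      rw [AlgEquiv.apply_symm_apply] at h1
      rw [map_add, map_mul, AlgEquiv.commutes, AlgEquiv.commutes, hrs] at h1
      conv_lhs => rw [h1]
      simp only [map_add, map_mul]
      ring
    have hy0 : AdjoinRoot.root ((X : R[X]) ^ 2 - X + C c) =
        algebraMap R _ (0 : R) + algebraMap R _ (1 : R) * AdjoinRoot.root _ := by simp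
    have huniq := as_repr_unique' hgm hgd (hy0.symm.trans hqy)
    have hqs : q * s = 1 := huniq.2.symm
    have hexp : algebraMap R (AdjoinRoot ((X : R[X]) ^ 2 - X + C c))
          (r ^ 2 - s ^ 2 * c + a * r + b) +
        algebraMap R _ (2 * r * s + s ^ 2 + a * s) * AdjoinRoot.root _ = 0 := by
      simp only [map_add, map_sub, map_mul, map_pow, map_ofNat]
      linear_combination herel -
        (φ (AdjoinRoot.root _) + algebraMap R _ r + algebraMap R _ s * AdjoinRoot.root _ +
          algebraMap R _ a) * hrs - (algebraMap R (AdjoinRoot _) s) ^ 2 * hy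
    have hcoef := as_repr_unique hgm hgd hexp
    have h2 : s * (2 * r + s + a) = 0 := by linear_combination hcoef.2
    have hs : IsUnit s := IsUnit.of_mul_eq_one (a := s) q (by linear_combination hqs)
    have h3 : 2 * r + a = -s := by
      obtain ⟨su, hsu⟩ := hs
      have h4 : (su : R) * ((su⁻¹ : Rˣ) : R) = 1 := su.mul_inv
      rw [hsu] at h4
      linear_combination ((su⁻¹ : Rˣ) : R) * h2 - (2 * r + s + a) * h4
    exact ⟨r, h3 ▸ hs.neg⟩
  · rintro ⟨v, hu⟩
    obtain ⟨u, hufwd⟩ := hu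
    have huw : (2 * v + a) * ((u⁻¹ : Rˣ) : R) = 1 := by rw [← hufwd]; exact u.mul_inv
    set w : R := ((u⁻¹ : Rˣ) : R)
    refine ⟨(v ^ 2 + a * v + b) * w ^ 2, ⟨?_⟩⟩
    have hy := hyrel ((v ^ 2 + a * v + b) * w ^ 2)
    have huw' : algebraMap R (AdjoinRoot ((X : R[X]) ^ 2 - X +
          C ((v ^ 2 + a * v + b) * w ^ 2))) (2 * v + a) * algebraMap R _ w = 1 := by
      rw [← map_mul, huw, map_one]
    have huw'' : algebraMap R (AdjoinRoot ((X : R[X]) ^ 2 + C a * X + C b)) (2 * v + a) *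
        algebraMap R _ w = 1 := by
      rw [← map_mul, huw, map_one]
    have h₁ : (aeval (algebraMap R (AdjoinRoot ((X : R[X]) ^ 2 - X +
          C ((v ^ 2 + a * v + b) * w ^ 2))) v -
        algebraMap R _ (2 * v + a) * AdjoinRoot.root _))
        ((X : R[X]) ^ 2 + C a * X + C b) = 0 := by
      simp only [map_add, map_mul, map_pow, aeval_X, aeval_C]
      simp only [map_mul, map_pow, map_add, map_ofNat] at hy huw' ⊢
      set A := algebraMap R (AdjoinRoot ((X : R[X]) ^ 2 - X + C ((v ^ 2 + a * v + b) * w ^ 2)))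
        with hA
      linear_combination (2 * A v + A a) ^ 2 * hy -
        ((A v ^ 2 + A a * A v + A b) * ((2 * A v + A a) * A w + 1)) * huw'
    have h₂ : (aeval ((algebraMap R (AdjoinRoot ((X : R[X]) ^ 2 + C a * X + C b)) v -
        AdjoinRoot.root _) * algebraMap R _ w))
        ((X : R[X]) ^ 2 - X + C ((v ^ 2 + a * v + b) * w ^ 2)) = 0 := by
      simp only [map_add, map_sub, map_mul, map_pow, aeval_X, aeval_C]
      simp only [map_mul, map_pow, map_add, map_ofNat] at huw'' ⊢
      linear_combination (algebraMap R (AdjoinRoot ((X : R[X]) ^ 2 + C a * X + C b)) w) ^ 2 *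
          hxrel +
        ((algebraMap R (AdjoinRoot ((X : R[X]) ^ 2 + C a * X + C b)) v * algebraMap R _ w -
          AdjoinRoot.root _ * algebraMap R _ w)) * huw''
    refine AlgEquiv.ofAlgHom (AdjoinRoot.liftAlgHom _ (Algebra.ofId R _) _ h₁) (AdjoinRoot.liftAlgHom _ (Algebra.ofId R _) _ h₂) ?_ ?_
    · apply AdjoinRoot.algHom_ext
      simp only [AlgHom.coe_comp, Function.comp_apply, AdjoinRoot.liftAlgHom_root, map_sub,
        map_mul, AlgHom.commutes, AdjoinRoot.liftAlgHom_root, AlgHom.coe_id, id_eq]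
      erw [AdjoinRoot.liftAlgHom_root]
      simp only [map_sub, map_mul, AlgHom.commutes]
      erw [AdjoinRoot.liftAlgHom_root]
      linear_combination (AdjoinRoot.root ((X : R[X]) ^ 2 - X +
        C ((v ^ 2 + a * v + b) * w ^ 2))) * huw'
    · apply AdjoinRoot.algHom_ext
      simp only [AlgHom.coe_comp, Function.comp_apply, AdjoinRoot.liftAlgHom_root, map_sub,
        map_mul, AlgHom.commutes, AdjoinRoot.liftAlgHom_root, AlgHom.coe_id, id_eq]
      erw [AdjoinRoot.liftAlgHom_root]
      simp only [map_sub, map_mul, AlgHom.commutes]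
      erw [AdjoinRoot.liftAlgHom_root]
      linear_combination -(algebraMap R (AdjoinRoot ((X : R[X]) ^ 2 + C a * X + C b)) v -
        AdjoinRoot.root _) * huw''
end

section
/- Let R be a commutative ring and A an R-algebra that is free of rank 2 as an R-module. Define τ : A → A by τ(u) = Tr_{A/R}(u)·1_A − u, where Tr_{A/R} is the trace form of A over R. Then τ is an R-algebra homomorphism and an involution, i.e. τ ∘ τ = id_A. -/
/-- Polarized Cayley–Hamilton identity for 2×2 matrices. -/
lemma matrix_key {R : Type*} [CommRing R] (X Y : Matrix (Fin 2) (Fin 2) R) :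
    X * Y + Y * X + (X.trace * Y.trace - (X * Y).trace) • (1 : Matrix (Fin 2) (Fin 2) R)
      = X.trace • Y + Y.trace • X := by
  ext i j
  fin_cases i <;> fin_cases j <;>
    simp [Matrix.mul_apply, Matrix.trace, Matrix.diag, Fin.sum_univ_two, Matrix.one_apply] <;>
    ring

/-- Let `A` be an `R`-algebra that is free of rank 2 as an `R`-module, and define
`τ : A → A` by `τ(u) = Tr_{A/R}(u)·1_A − u`. Then `τ` is an `R`-algebra homomorphism
and an involution. -/
theorem stmt_6 (R A : Type*) [CommRing R] [CommRing A] [Algebra R A]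
    (basis : Module.Basis (Fin 2) R A) :
    ∃ τ : A →ₐ[R] A,
      (∀ u : A, τ u = algebraMap R A (Algebra.trace R A u) - u) ∧
      τ.comp τ = AlgHom.id R A := by
  haveI : Module.Free R A := Module.Free.of_basis basis
  haveI : Module.Finite R A := Module.Finite.of_basis basis
  set T : A →ₗ[R] R := Algebra.trace R A with hT
  set M := Algebra.leftMulMatrix basis with hM
  have htr : ∀ u : A, T u = (M u).trace := fun u =>
    Algebra.trace_eq_matrix_trace basis u
  have htr1 : T 1 = 2 := by
    rw [htr, map_one, Matrix.trace_one]; norm_num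
  -- the underlying linear map
  set L : A →ₗ[R] A := (Algebra.linearMap R A).comp T - LinearMap.id with hL
  have hLdef : ∀ u : A, L u = algebraMap R A (T u) - u := fun u => rfl
  have hmul : ∀ u v : A, L (u * v) = L u * L v := by
    intro u v
    apply Algebra.leftMulMatrix_injective basis
    rw [hLdef, hLdef, hLdef]
    simp only [map_sub, _root_.map_mul, AlgHom.commutes, ← hM]
    rw [Algebra.algebraMap_eq_smul_one, Algebra.algebraMap_eq_smul_one,
      Algebra.algebraMap_eq_smul_one]
    rw [htr u, htr v, htr (u * v), _root_.map_mul]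
    have key := matrix_key (M u) (M v)
    have hcomm : M v * M u = M u * M v := by
      rw [← map_mul, ← map_mul, mul_comm]
    rw [sub_mul, mul_sub, mul_sub, Matrix.smul_mul, Matrix.mul_smul, smul_smul,
      Matrix.smul_mul, Matrix.mul_smul]
    simp only [Matrix.one_mul, Matrix.mul_one]
    linear_combination (norm := module) hcomm - key
  refine ⟨AlgHom.ofLinearMap L ?_ hmul, fun u => hLdef u, ?_⟩
  · show algebraMap R A (T 1) - 1 = 1
    rw [htr1, map_ofNat]; ring
  · ext u
    simp only [AlgHom.comp_apply, AlgHom.ofLinearMap_apply, AlgHom.id_apply]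
    rw [hLdef, hLdef, map_sub]
    have h2 : T ((algebraMap R A) (T u)) = T u * 2 := by
      rw [Algebra.algebraMap_eq_smul_one, map_smul, htr1, smul_eq_mul]
    rw [h2]
    have h3 : T u * 2 - T u = T u := by ring
    rw [h3]
    ring
end

section
/- Let R be a commutative ring and a, b ∈ R. Then a² − 4b is a unit in R if and only if there exist v, w ∈ R such that 2w = av and −aw + 2bv = 1. -/
/-- For `a, b` in a commutative ring `R`, `a² − 4b` is a unit in `R` iff there exist
`v, w ∈ R` with `2w = av` and `−aw + 2bv = 1`. -/
theorem stmt_7 (R : Type*) [CommRing R] (a b : R) :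
    IsUnit (a ^ 2 - 4 * b) ↔ ∃ v w : R, 2 * w = a * v ∧ -(a * w) + 2 * b * v = 1 := by
  constructor
  · intro h
    obtain ⟨c, hc⟩ := h.exists_right_inv
    exact ⟨-2 * c, -a * c, by ring, by linear_combination hc⟩
  · rintro ⟨v, w, h1, h2⟩
    exact IsUnit.of_mul_eq_one (w ^ 2 - b * v ^ 2)
      (by linear_combination (-b * (2 * w - a * v)) * h1 + (-(a * w - 2 * b * v - 1)) * h2)
end

section
/- Let R be a commutative ring and a, b, c, d ∈ R. Write A = R[x]/⟨x² + ax + b⟩ and B = R[y]/⟨y² + cy + d⟩, and let x̄, ȳ be the classes of x and y. Then the map sending an R-algebra isomorphism φ : A → B to the pair (v, w) ∈ R × R determined by φ(x̄) = w·ȳ + v·1_B is a bijection from the set of R-algebra isomorphisms A → B onto the set {(v, w) ∈ R × R : w is a unit, 2v = cw − a, and −dw² + v² + av + b = 0}. -/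
open Polynomial AdjoinRoot

namespace Stmt11

variable {R : Type*} [CommRing R]

theorem monic_quad (c d : R) : (X ^ 2 + C c * X + C d : R[X]).Monic := by
  monicity!

theorem degree_quad [Nontrivial R] (c d : R) : (X ^ 2 + C c * X + C d : R[X]).degree = 2 := by
  compute_degree!

noncomputable def liftHom (f : R[X]) {S : Type*} [CommRing S] [Algebra R S] (x : S)
    (h : aeval x f = 0) : AdjoinRoot f →ₐ[R] S :=
  liftAlgHom f (Algebra.ofId R S) x h

@[simp] theorem liftHom_root (f : R[X]) {S : Type*} [CommRing S] [Algebra R S] (x : S)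
    (h : aeval x f = 0) : liftHom f x h (root f) = x := by
  exact liftAlgHom_root f (Algebra.ofId R S) x h

noncomputable def combo (c d v w : R) : AdjoinRoot (X ^ 2 + C c * X + C d : R[X]) :=
  algebraMap R _ v + algebraMap R _ w * root _

theorem combo_eq_mk (c d v w : R) :
    combo c d v w = mk _ (C v + C w * X) := by
  simp [combo, AdjoinRoot.algebraMap_eq, map_add, map_mul, mk_C, mk_X]

theorem mod_combo [Nontrivial R] (c d v w : R) :
    modByMonicHom (monic_quad c d) (combo c d v w) = C v + C w * X := by
  rw [combo_eq_mk, modByMonicHom_mk]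
  apply (modByMonic_eq_self_iff (monic_quad c d)).mpr
  rw [degree_quad]
  apply lt_of_le_of_lt (degree_add_le _ _)
  rw [max_lt_iff]
  constructor
  · exact lt_of_le_of_lt degree_C_le (by decide)
  · exact lt_of_le_of_lt (degree_C_mul_X_le _) (by decide)

theorem combo_injective [Nontrivial R] (c d : R) {v w v' w' : R}
    (h : combo c d v w = combo c d v' w') : v = v' ∧ w = w' := by
  have h2 := congrArg (modByMonicHom (monic_quad c d)) h
  rw [mod_combo, mod_combo] at h2
  constructor
  · have := congrArg (fun p => coeff p 0) h2; simpa using this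
  · have := congrArg (fun p => coeff p 1) h2; simpa using this

theorem eq_combo [Nontrivial R] (c d : R) (z : AdjoinRoot (X ^ 2 + C c * X + C d : R[X])) :
    z = combo c d ((modByMonicHom (monic_quad c d) z).coeff 0)
      ((modByMonicHom (monic_quad c d) z).coeff 1) := by
  obtain ⟨p, rfl⟩ := mk_surjective z
  rw [modByMonicHom_mk]
  have hd : (p %ₘ (X ^ 2 + C c * X + C d)).degree ≤ 1 := by
    have h := degree_modByMonic_lt p (monic_quad c d)
    rw [degree_quad] at h
    exact Order.le_of_lt_succ (by exact_mod_cast h)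
  have hp : mk (X ^ 2 + C c * X + C d) p = mk _ (p %ₘ (X ^ 2 + C c * X + C d)) := by
    conv_lhs => rw [← modByMonic_add_div p (X ^ 2 + C c * X + C d)]
    rw [map_add, map_mul, mk_self, zero_mul, add_zero]
  rw [hp, combo_eq_mk]
  exact congrArg _ ((eq_X_add_C_of_degree_le_one hd).trans (add_comm _ _))

theorem aeval_combo (a b c d v w : R) :
    aeval (combo c d v w) (X ^ 2 + C a * X + C b : R[X]) =
      combo c d (-(d * w ^ 2) + v ^ 2 + a * v + b) (w * (2 * v + a - c * w)) := by
  have hrel : (root (X ^ 2 + C c * X + C d : R[X])) ^ 2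
      + algebraMap R _ c * root _ + algebraMap R _ d = 0 := by
    have h := mk_self (f := (X ^ 2 + C c * X + C d : R[X]))
    simpa [map_add, map_mul, map_pow, AdjoinRoot.algebraMap_eq, mk_X] using h
  simp only [combo, map_add, map_mul, map_pow, aeval_X, aeval_C, map_neg, map_sub, map_ofNat]
  linear_combination (algebraMap R (AdjoinRoot (X ^ 2 + C c * X + C d : R[X])) w) ^ 2 * hrel

theorem combo_zero (c d : R) : combo c d 0 0 = 0 := by simp [combo]
theorem combo_root (c d : R) : combo c d 0 1 = root _ := by simp [combo]

theorem forward [Nontrivial R] (a b c d : R)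
    (φ : AdjoinRoot (X ^ 2 + C a * X + C b : R[X]) ≃ₐ[R]
      AdjoinRoot (X ^ 2 + C c * X + C d : R[X])) :
    IsUnit ((modByMonicHom (monic_quad c d) (φ (root _))).coeff 1) ∧
      2 * ((modByMonicHom (monic_quad c d) (φ (root _))).coeff 0) =
        c * ((modByMonicHom (monic_quad c d) (φ (root _))).coeff 1) - a ∧
      -(d * ((modByMonicHom (monic_quad c d) (φ (root _))).coeff 1) ^ 2) +
        ((modByMonicHom (monic_quad c d) (φ (root _))).coeff 0) ^ 2 +
        a * ((modByMonicHom (monic_quad c d) (φ (root _))).coeff 0) + b = 0 := by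
  set v := (modByMonicHom (monic_quad c d) (φ (root _))).coeff 0 with hv
  set w := (modByMonicHom (monic_quad c d) (φ (root _))).coeff 1 with hw
  have hz : φ (root _) = combo c d v w := eq_combo c d _
  have h0 : aeval (φ (root (X ^ 2 + C a * X + C b : R[X]))) (X ^ 2 + C a * X + C b : R[X]) = 0 := by
    rw [aeval_algHom_apply φ]
    have : aeval (root (X ^ 2 + C a * X + C b : R[X])) (X ^ 2 + C a * X + C b : R[X]) = 0 := by
      rw [aeval_def, AdjoinRoot.algebraMap_eq]; exact eval₂_root _
    simp [this]
  rw [hz, aeval_combo, ← combo_zero c d] at h0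
  obtain ⟨h2, h1a⟩ := combo_injective c d h0
  set v₂ := (modByMonicHom (monic_quad a b) (φ.symm (root _))).coeff 0 with hv2
  set w₂ := (modByMonicHom (monic_quad a b) (φ.symm (root _))).coeff 1 with hw2
  have hz' : φ.symm (root _) = combo a b v₂ w₂ := eq_combo a b _
  have hcomp : combo c d (v₂ + w₂ * v) (w₂ * w) = combo c d 0 1 := by
    rw [combo_root]
    have : φ (combo a b v₂ w₂) = combo c d (v₂ + w₂ * v) (w₂ * w) := by
      simp only [combo, map_add, map_mul, AlgEquiv.commutes, hz]
      ring
    rw [← this, ← hz', φ.apply_symm_apply]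
  have hwu : IsUnit w := by
    obtain ⟨-, hw1⟩ := combo_injective c d hcomp
    exact IsUnit.of_mul_eq_one w₂ (by linear_combination hw1)
  refine ⟨hwu, ?_, h2⟩
  have := hwu.mul_right_eq_zero.mp h1a
  linear_combination this

noncomputable def bwd (a b c d v w : R) (hw : IsUnit w)
    (h1 : 2 * v = c * w - a) (h2 : -(d * w ^ 2) + v ^ 2 + a * v + b = 0) :
    AdjoinRoot (X ^ 2 + C a * X + C b : R[X]) ≃ₐ[R]
      AdjoinRoot (X ^ 2 + C c * X + C d : R[X]) := by
  set e : R := ↑hw.unit⁻¹ with he_def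
  have he : w * e = 1 := by
    nth_rewrite 1 [← hw.unit_spec]; exact hw.unit.mul_inv
  refine AlgEquiv.ofAlgHom
    (liftHom _ (combo c d v w) ?_)
    (liftHom _ (combo a b (-(v * e)) e) ?_) ?_ ?_
  · rw [aeval_combo, show -(d * w ^ 2) + v ^ 2 + a * v + b = 0 from h2,
      show w * (2 * v + a - c * w) = 0 by linear_combination w * h1, combo_zero]
  · rw [aeval_combo]
    have c1 : e * (2 * -(v * e) + c - a * e) = 0 := by
      have h3 : w ^ 3 * (e * (2 * -(v * e) + c - a * e)) = 0 := by
        linear_combination (-w) * h1 +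
          (-2 * v * w ^ 2 * e - 2 * v * w + c * w ^ 2 - a * w ^ 2 * e - a * w) * he
      exact ((hw.pow 3).mul_right_eq_zero).mp h3
    have c2 : -(b * e ^ 2) + (-(v * e)) ^ 2 + c * -(v * e) + d = 0 := by
      have h3 : w ^ 2 * (-(b * e ^ 2) + (-(v * e)) ^ 2 + c * -(v * e) + d) = 0 := by
        linear_combination v * h1 + (-1 : R) * h2 +
          (-b * w * e - b + v ^ 2 * w * e + v ^ 2 - c * v * w) * he
      exact ((hw.pow 2).mul_right_eq_zero).mp h3
    rw [c2, c1, combo_zero]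
  · apply AdjoinRoot.algHom_ext
    have heB : algebraMap R (AdjoinRoot (X ^ 2 + C c * X + C d : R[X])) w *
        algebraMap R _ e = 1 := by rw [← map_mul, he, map_one]
    simp only [AlgHom.coe_comp, Function.comp_apply, liftHom_root, combo, map_add, map_mul,
      map_neg, AlgHom.commutes, AlgHom.coe_id, id_eq]
    linear_combination (root (X ^ 2 + C c * X + C d : R[X])) * heB
  · apply AdjoinRoot.algHom_ext
    have heA : algebraMap R (AdjoinRoot (X ^ 2 + C a * X + C b : R[X])) w *
        algebraMap R _ e = 1 := by rw [← map_mul, he, map_one]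
    simp only [AlgHom.coe_comp, Function.comp_apply, liftHom_root, combo, map_add, map_mul,
      map_neg, AlgHom.commutes, AlgHom.coe_id, id_eq]
    linear_combination (root (X ^ 2 + C a * X + C b : R[X]) -
      algebraMap R _ v) * heA

theorem bwd_root (a b c d v w : R) (hw : IsUnit w)
    (h1 : 2 * v = c * w - a) (h2 : -(d * w ^ 2) + v ^ 2 + a * v + b = 0) :
    bwd a b c d v w hw h1 h2 (root _) = combo c d v w := by
  simp [bwd, liftHom_root]

end Stmt11

open Stmt11 in
/-- For `a, b, c, d ∈ R`, with `A = R[x]/⟨x² + ax + b⟩` and `B = R[y]/⟨y² + cy + d⟩`,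
the map sending an `R`-algebra isomorphism `φ : A → B` to the pair `(v, w)` with
`φ(x̄) = w·ȳ + v` is a bijection onto
`{(v, w) : w ∈ R^×, 2v = cw − a, −dw² + v² + av + b = 0}`. -/
theorem stmt_11 (R : Type*) [CommRing R] (a b c d : R) :
    ∃ Φ : (AdjoinRoot (X ^ 2 + C a * X + C b) ≃ₐ[R] AdjoinRoot (X ^ 2 + C c * X + C d)) ≃
        {p : R × R // IsUnit p.2 ∧ 2 * p.1 = c * p.2 - a ∧
          -(d * p.2 ^ 2) + p.1 ^ 2 + a * p.1 + b = 0},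
      ∀ φ, φ (AdjoinRoot.root _) =
        algebraMap R (AdjoinRoot (X ^ 2 + C c * X + C d)) (Φ φ : R × R).2 *
            AdjoinRoot.root _ +
          algebraMap R (AdjoinRoot (X ^ 2 + C c * X + C d)) (Φ φ : R × R).1 := by
  rcases subsingleton_or_nontrivial R with hR | hR
  · -- trivial ring
    haveI hP : Subsingleton R[X] := ⟨fun p q => Polynomial.ext fun n => Subsingleton.elim _ _⟩
    haveI : Subsingleton (AdjoinRoot (X ^ 2 + C a * X + C b : R[X])) :=
      AdjoinRoot.mk_surjective.subsingleton
    haveI : Subsingleton (AdjoinRoot (X ^ 2 + C c * X + C d : R[X])) :=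
      AdjoinRoot.mk_surjective.subsingleton
    refine ⟨⟨fun _ => ⟨(0, 0), ?_, Subsingleton.elim _ _, Subsingleton.elim _ _⟩,
      fun _ => AlgEquiv.ofAlgHom (liftHom _ 0 (Subsingleton.elim _ _))
        (liftHom _ 0 (Subsingleton.elim _ _))
        (AlgHom.ext fun _ => Subsingleton.elim _ _)
        (AlgHom.ext fun _ => Subsingleton.elim _ _),
      fun φ => AlgEquiv.ext fun _ => Subsingleton.elim _ _,
      fun p => Subtype.ext (Subsingleton.elim _ _)⟩, fun φ => Subsingleton.elim _ _⟩
    rw [Subsingleton.elim (0 : R) 1]; exact isUnit_one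
  · refine ⟨⟨fun φ => ⟨(((modByMonicHom (monic_quad c d) (φ (root _))).coeff 0),
        ((modByMonicHom (monic_quad c d) (φ (root _))).coeff 1)), forward a b c d φ⟩,
      fun p => bwd a b c d p.1.1 p.1.2 p.2.1 p.2.2.1 p.2.2.2, ?_, ?_⟩, ?_⟩
    · intro φ
      apply AlgEquiv.coe_algHom_injective
      apply AdjoinRoot.algHom_ext
      show bwd a b c d _ _ _ _ _ (root _) = φ (root _)
      rw [bwd_root]
      exact (eq_combo c d _).symm
    · intro p
      apply Subtype.ext
      have h := bwd_root a b c d p.1.1 p.1.2 p.2.1 p.2.2.1 p.2.2.2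
      show ((modByMonicHom (monic_quad c d) _).coeff 0,
        (modByMonicHom (monic_quad c d) _).coeff 1) = p.1
      rw [h, mod_combo]
      ext <;> simp
    · intro φ
      exact (eq_combo c d _).trans (add_comm _ _)
end

section
/- Let R be a commutative ring and a, b ∈ R. Write A = R[x]/⟨x² + ax + b⟩ and let x̄ be the class of x. The set G = {(v, w) ∈ R × R : w is a unit, 2v = a(w − 1), and b(1 − w²) + v² + av = 0} is a group under the operation (v, w) ⋆ (v', w') = (wv' + v, ww'), with identity (0, 1) and inverse of (v, w) equal to (−w⁻¹v, w⁻¹); and the bijection sending an R-algebra automorphism φ of A to the pair (v, w) with φ(x̄) = w·x̄ + v·1_A is a group isomorphism from the automorphism group of the R-algebra A (with composition φ ∘ φ' corresponding to (v, w) ⋆ (v', w')) onto (G, ⋆). -/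
open Polynomial

section Stmt12AuxSection
open AdjoinRoot

namespace Stmt12Aux
variable {R : Type*} [CommRing R] (a b : R)

noncomputable def fp : R[X] := X ^ 2 + C a * X + C b

lemma monic_fp : (fp a b).Monic := by
  have h : fp a b = X ^ 2 + (C a * X + C b) := by unfold fp; ring
  rw [h]
  exact monic_X_pow_add (lt_of_le_of_lt degree_linear_le (by norm_num))

local notation "am" => algebraMap R (AdjoinRoot (fp a b))

lemma degree_fp [Nontrivial R] : (fp a b).degree = 2 := by
  unfold fp; compute_degree!

/-- uniqueness of coordinates -/
lemma uniq {v w : R} (h : am w * root _ + am v = 0) : v = 0 ∧ w = 0 := by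
  rcases subsingleton_or_nontrivial R with hR | hR
  · exact ⟨Subsingleton.elim _ _, Subsingleton.elim _ _⟩
  have h2 : mk (fp a b) (C w * X + C v) = 0 := by
    rw [map_add, map_mul, mk_C, mk_X, mk_C, ← AdjoinRoot.algebraMap_eq]; exact h
  rw [mk_eq_zero] at h2
  have hz : C w * X + C v = 0 := by
    by_contra hne
    exact (monic_fp a b).not_dvd_of_degree_lt hne
      (lt_of_le_of_lt (degree_linear_le) (by rw [degree_fp]; norm_num)) h2
  constructor
  · have := congrArg (fun p => coeff p 0) hz; simpa using this
  · have := congrArg (fun p => coeff p 1) hz; simpa using this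

lemma uniq' {v w v' w' : R} (h : am w * root _ + am v = am w' * root _ + am v') :
    v = v' ∧ w = w' := by
  have h0 : am (w - w') * root (fp a b) + am (v - v') = 0 := by
    rw [map_sub, map_sub]; linear_combination h
  obtain ⟨h1, h2⟩ := uniq a b h0
  exact ⟨sub_eq_zero.mp h1, sub_eq_zero.mp h2⟩

lemma exists_coords (z : AdjoinRoot (fp a b)) :
    ∃ p : R × R, z = am p.2 * root _ + am p.1 := by
  rcases subsingleton_or_nontrivial R with hR | hR
  · haveI : Subsingleton (AdjoinRoot (fp a b)) :=
      subsingleton_of_forall_eq 0 fun y => by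
        obtain ⟨q, rfl⟩ := mk_surjective y
        rw [Subsingleton.elim q 0, map_zero]
    exact ⟨(0, 0), Subsingleton.elim _ _⟩
  obtain ⟨q, rfl⟩ := mk_surjective z
  set r := q %ₘ (fp a b) with hr
  have hmk : mk (fp a b) q = mk _ r := by
    rw [hr, modByMonic_eq_sub_mul_div _ (fp a b), map_sub, map_mul, mk_self,
      zero_mul, sub_zero]
  have hdeg : r.degree ≤ 1 := by
    have := degree_modByMonic_lt q (monic_fp a b)
    rw [degree_fp] at this
    exact Order.le_of_lt_succ (by exact_mod_cast this)
  refine ⟨(r.coeff 0, r.coeff 1), ?_⟩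
  rw [hmk]
  conv_lhs => rw [eq_X_add_C_of_degree_le_one hdeg]
  rw [map_add, map_mul, mk_C, mk_X, mk_C, ← AdjoinRoot.algebraMap_eq]

lemma root_rel : (root (fp a b)) ^ 2 + am a * root (fp a b) + am b = 0 := by
  have h : mk (fp a b) (X ^ 2 + C a * X + C b) = 0 := mk_self
  rw [map_add, map_add, map_pow, map_mul, mk_C, mk_C, mk_X, ← AdjoinRoot.algebraMap_eq] at h
  exact h

lemma expand (v w : R) :
    aeval (am w * root (fp a b) + am v) (fp a b) =
      am (w * (2 * v - a * (w - 1))) * root (fp a b)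
        + am (b * (1 - w ^ 2) + v ^ 2 + a * v) := by
  have hr := root_rel a b
  show aeval _ (X ^ 2 + C a * X + C b) = _
  simp only [map_add, map_mul, map_pow, map_sub, map_one, map_ofNat, aeval_X, aeval_C]
  linear_combination (am w) ^ 2 * hr

lemma aeval_zero {v w : R} (h1 : 2 * v = a * (w - 1))
    (h2 : b * (1 - w ^ 2) + v ^ 2 + a * v = 0) :
    aeval (am w * root (fp a b) + am v) (fp a b) = 0 := by
  rw [expand, show 2 * v - a * (w - 1) = 0 by rw [h1]; ring, h2]
  simp

end Stmt12Aux

namespace Part2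
open Stmt12Aux
variable {R : Type*} [CommRing R] (a b : R)

local notation "am" => algebraMap R (AdjoinRoot (fp a b))

noncomputable def coords (z : AdjoinRoot (fp a b)) : R × R := (exists_coords a b z).choose

lemma coords_spec (z : AdjoinRoot (fp a b)) :
    z = am (coords a b z).2 * root _ + am (coords a b z).1 := (exists_coords a b z).choose_spec

lemma coords_eq {v w : R} (z : AdjoinRoot (fp a b)) (h : z = am w * root _ + am v) :
    coords a b z = (v, w) := by
  obtain ⟨h1, h2⟩ := uniq' a b ((coords_spec a b z).symm.trans h)
  exact Prod.ext h1 h2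

noncomputable def psi (v w : R) (h1 : 2 * v = a * (w - 1))
    (h2 : b * (1 - w ^ 2) + v ^ 2 + a * v = 0) :
    AdjoinRoot (fp a b) →ₐ[R] AdjoinRoot (fp a b) :=
  liftAlgHom _ (Algebra.ofId R _) _ (aeval_zero a b h1 h2)

lemma psi_root (v w : R) (h1 : 2 * v = a * (w - 1))
    (h2 : b * (1 - w ^ 2) + v ^ 2 + a * v = 0) :
    psi a b v w h1 h2 (root _) = am w * root _ + am v := by
  unfold psi; apply liftAlgHom_root

lemma inv_cond1 {v w wi : R} (hww : w * wi = 1) (h1 : 2 * v = a * (w - 1)) :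
    2 * (-(wi * v)) = a * (wi - 1) := by
  linear_combination (-wi) * h1 - a * hww

lemma inv_cond2 {v w wi : R} (hww : w * wi = 1) (h1 : 2 * v = a * (w - 1))
    (h2 : b * (1 - w ^ 2) + v ^ 2 + a * v = 0) :
    b * (1 - wi ^ 2) + (-(wi * v)) ^ 2 + a * (-(wi * v)) = 0 := by
  linear_combination (wi ^ 2 * v) * h1 - wi ^ 2 * h2 + (a * v * wi - b * (w * wi + 1)) * hww

/-- the subtype `G` -/
abbrev Gt := {p : R × R // IsUnit p.2 ∧ 2 * p.1 = a * (p.2 - 1) ∧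
    b * (1 - p.2 ^ 2) + p.1 ^ 2 + a * p.1 = 0}

lemma am_mul_inv (g : Gt a b) : g.1.2 * ↑g.2.1.unit⁻¹ = 1 := g.2.1.mul_val_inv

noncomputable def theta (g : Gt a b) :
    AdjoinRoot (fp a b) ≃ₐ[R] AdjoinRoot (fp a b) :=
  AlgEquiv.ofAlgHom (psi a b g.1.1 g.1.2 g.2.2.1 g.2.2.2)
    (psi a b (-(↑g.2.1.unit⁻¹ * g.1.1)) ↑g.2.1.unit⁻¹
      (inv_cond1 a (am_mul_inv a b g) g.2.2.1)
      (inv_cond2 a b (am_mul_inv a b g) g.2.2.1 g.2.2.2))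
    (algHom_ext (by
      have hww : am g.1.2 * am ↑g.2.1.unit⁻¹ = 1 := by
        rw [← map_mul, am_mul_inv a b g, map_one]
      simp only [AlgHom.coe_comp, Function.comp_apply, psi_root, map_add, map_mul, map_neg,
        AlgHom.commutes, AlgHom.id_apply]
      linear_combination (root (fp a b)) * hww))
    (algHom_ext (by
      have hww : am g.1.2 * am ↑g.2.1.unit⁻¹ = 1 := by
        rw [← map_mul, am_mul_inv a b g, map_one]
      simp only [AlgHom.coe_comp, Function.comp_apply, psi_root, map_add, map_mul, map_neg,
        AlgHom.commutes, AlgHom.id_apply]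
      linear_combination (root (fp a b) - am (g.1).1) * hww))

lemma theta_apply (g : Gt a b) (z : AdjoinRoot (fp a b)) :
    theta a b g z = psi a b g.1.1 g.1.2 g.2.2.1 g.2.2.2 z := by
  rw [theta, AlgEquiv.ofAlgHom]
  rfl

lemma aeval_root_self : aeval (root (fp a b)) (fp a b) = 0 := by
  have h := aeval_zero a b (v := 0) (w := 1) (by ring) (by ring)
  simpa using h

lemma mem_G (φ : AdjoinRoot (fp a b) ≃ₐ[R] AdjoinRoot (fp a b)) :
    IsUnit (coords a b (φ (root _))).2 ∧
      2 * (coords a b (φ (root _))).1 = a * ((coords a b (φ (root _))).2 - 1) ∧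
      b * (1 - (coords a b (φ (root _))).2 ^ 2) + (coords a b (φ (root _))).1 ^ 2
        + a * (coords a b (φ (root _))).1 = 0 := by
  set p := coords a b (φ (root (fp a b))) with hp
  have hspec : φ (root (fp a b)) = am p.2 * root _ + am p.1 := coords_spec a b _
  set q := coords a b (φ.symm (root (fp a b))) with hq
  have hqspec : φ.symm (root (fp a b)) = am q.2 * root _ + am q.1 := coords_spec a b _
  -- aeval of φ root is zero
  have haev : aeval (φ (root (fp a b))) (fp a b) = 0 := by
    rw [aeval_algHom_apply, aeval_root_self, map_zero]
  rw [hspec, Stmt12Aux.expand] at haev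
  obtain ⟨e2, e1⟩ := uniq a b haev
  -- unit
  have hcomp : φ (φ.symm (root (fp a b))) = root (fp a b) := φ.apply_symm_apply _
  rw [hqspec, map_add, map_mul, AlgEquiv.commutes, AlgEquiv.commutes, hspec] at hcomp
  have hcomp' : am (q.2 * p.2) * root (fp a b) + am (q.2 * p.1 + q.1) =
      am 1 * root (fp a b) + am 0 := by
    rw [map_mul, map_add, map_mul, map_one, map_zero]
    linear_combination hcomp
  obtain ⟨_, hu⟩ := uniq' a b hcomp'
  refine ⟨IsUnit.of_mul_eq_one q.2 (by linear_combination hu), ?_, e2⟩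
  linear_combination q.2 * e1 - (2 * p.1 - a * (p.2 - 1)) * hu

noncomputable def Phi :
    (AdjoinRoot (fp a b) ≃ₐ[R] AdjoinRoot (fp a b)) ≃ Gt a b where
  toFun φ := ⟨coords a b (φ (root _)), mem_G a b φ⟩
  invFun g := theta a b g
  left_inv φ := by
    apply AlgEquiv.ext
    intro z
    have h : psi a b (coords a b (φ (root (fp a b)))).1 (coords a b (φ (root (fp a b)))).2
        (mem_G a b φ).2.1 (mem_G a b φ).2.2 = (φ : AdjoinRoot (fp a b) →ₐ[R] _) := by
      apply AdjoinRoot.algHom_ext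
      rw [psi_root]
      exact (coords_spec a b _).symm
    rw [theta_apply, h]
    rfl
  right_inv g := by
    apply Subtype.ext
    show coords a b (theta a b g (root _)) = g.1
    rw [theta_apply, psi_root, coords_eq a b _ rfl]

lemma Phi_root (φ : AdjoinRoot (fp a b) ≃ₐ[R] AdjoinRoot (fp a b)) :
    φ (root _) = am ((Phi a b φ : R × R)).2 * root _ + am ((Phi a b φ : R × R)).1 :=
  coords_spec a b _

lemma Phi_refl : ((Phi a b AlgEquiv.refl : Gt a b) : R × R) = (0, 1) := by
  show coords a b (AlgEquiv.refl (root _)) = (0, 1)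
  apply coords_eq
  simp

lemma Phi_trans (φ φ' : AdjoinRoot (fp a b) ≃ₐ[R] AdjoinRoot (fp a b)) :
    ((Phi a b (φ.trans φ') : Gt a b) : R × R) =
      ((Phi a b φ : R × R).2 * (Phi a b φ' : R × R).1 + (Phi a b φ : R × R).1,
        (Phi a b φ : R × R).2 * (Phi a b φ' : R × R).2) := by
  show coords a b ((φ.trans φ') (root _)) = _
  apply coords_eq
  rw [AlgEquiv.trans_apply, Phi_root a b φ, map_add, map_mul, AlgEquiv.commutes,
    AlgEquiv.commutes, Phi_root a b φ', map_mul, map_add, map_mul]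
  ring

lemma Phi_symm (φ : AdjoinRoot (fp a b) ≃ₐ[R] AdjoinRoot (fp a b)) :
    (Phi a b φ : R × R).2 * (Phi a b φ.symm : R × R).2 = 1 ∧
      (Phi a b φ.symm : R × R).1 = -((Phi a b φ.symm : R × R).2 * (Phi a b φ : R × R).1) := by
  have hrefl : φ.trans φ.symm = AlgEquiv.refl := by
    apply AlgEquiv.ext; intro z; simp
  have h := Phi_trans a b φ φ.symm
  rw [hrefl, Phi_refl] at h
  have h1 := (congrArg Prod.fst h).symm
  have h2 := (congrArg Prod.snd h).symm
  simp only at h1 h2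
  exact ⟨h2, by linear_combination (Phi a b φ.symm : R × R).2 * h1
    - (Phi a b φ.symm : R × R).1 * h2⟩

end Part2

end Stmt12AuxSection

/-- Let `A = R[x]/⟨x² + ax + b⟩` and
`G = {(v, w) : w ∈ R^×, 2v = a(w − 1), b(1 − w²) + v² + av = 0}`. The bijection
sending an `R`-algebra automorphism `φ` of `A` to the pair `(v, w)` with
`φ(x̄) = w·x̄ + v` is a group isomorphism onto `G` equipped with the operation
`(v, w) ⋆ (v', w') = (wv' + v, ww')` (identity `(0, 1)`, inverse of `(v, w)` being
`(−w⁻¹v, w⁻¹)`), where composition `φ ∘ φ'` (apply `φ` first, then `φ'`) corresponds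
to `(v, w) ⋆ (v', w')`. -/
theorem stmt_12 (R : Type*) [CommRing R] (a b : R) :
    ∃ Φ : (AdjoinRoot (X ^ 2 + C a * X + C b) ≃ₐ[R] AdjoinRoot (X ^ 2 + C a * X + C b)) ≃
        {p : R × R // IsUnit p.2 ∧ 2 * p.1 = a * (p.2 - 1) ∧
          b * (1 - p.2 ^ 2) + p.1 ^ 2 + a * p.1 = 0},
      (∀ φ, φ (AdjoinRoot.root _) =
          algebraMap R (AdjoinRoot (X ^ 2 + C a * X + C b)) (Φ φ : R × R).2 *
              AdjoinRoot.root _ +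
            algebraMap R (AdjoinRoot (X ^ 2 + C a * X + C b)) (Φ φ : R × R).1) ∧
      (Φ AlgEquiv.refl : R × R) = (0, 1) ∧
      (∀ φ φ', (Φ (φ.trans φ') : R × R) =
          ((Φ φ : R × R).2 * (Φ φ' : R × R).1 + (Φ φ : R × R).1,
            (Φ φ : R × R).2 * (Φ φ' : R × R).2)) ∧
      (∀ φ, (Φ φ : R × R).2 * (Φ φ.symm : R × R).2 = 1 ∧
        (Φ φ.symm : R × R).1 = -((Φ φ.symm : R × R).2 * (Φ φ : R × R).1)) := by
  exact ⟨Part2.Phi a b, Part2.Phi_root a b, Part2.Phi_refl a b, Part2.Phi_trans a b,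
    Part2.Phi_symm a b⟩
end

section
/- Let R be a commutative ring in which 2 is a nonzerodivisor, and let a, b, c, d ∈ R. Then there is a bijection between the set of R-algebra isomorphisms R[x]/⟨x² + ax + b⟩ → R[y]/⟨y² + cy + d⟩ and the set {w ∈ R : w is a unit, a² − 4b = w²(c² − 4d), and 2 divides cw − a in R}, sending an isomorphism φ to the unique unit w with φ(x̄) = w·ȳ + v·1 for some v ∈ R. -/
open Polynomial AdjoinRoot

namespace S13
variable {R : Type*} [CommRing R]

lemma monic_quad (c d : R) : (X ^ 2 + C c * X + C d).Monic := by monicity!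

noncomputable def elt (c d w v : R) : AdjoinRoot (X ^ 2 + C c * X + C d) :=
  algebraMap R _ w * root _ + algebraMap R _ v

lemma elt_mk (c d w v : R) : elt c d w v = mk _ (C w * X + C v) := by
  rw [map_add, map_mul, AdjoinRoot.mk_C, AdjoinRoot.mk_C, AdjoinRoot.mk_X, elt,
    AdjoinRoot.algebraMap_eq]

lemma root_eq (c d : R) : root (X ^ 2 + C c * X + C d) = elt c d 1 0 := by simp [elt]

lemma algebraMap_eq_elt (c d r : R) :
    algebraMap R (AdjoinRoot (X ^ 2 + C c * X + C d)) r = elt c d 0 r := by simp [elt]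

lemma elt_add (c d w v w' v' : R) :
    elt c d w v + elt c d w' v' = elt c d (w + w') (v + v') := by
  simp [elt, map_add]; ring

lemma elt_sub (c d w v w' v' : R) :
    elt c d w v - elt c d w' v' = elt c d (w - w') (v - v') := by
  simp [elt, map_sub]; ring

lemma ysq (c d : R) : (root (X ^ 2 + C c * X + C d)) ^ 2 = elt c d (-c) (-d) := by
  have h := AdjoinRoot.eval₂_root (X ^ 2 + C c * X + C d)
  simp only [eval₂_add, eval₂_mul, eval₂_pow, eval₂_X, eval₂_C] at h
  simp only [elt, ← AdjoinRoot.algebraMap_eq, map_neg]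
  rw [AdjoinRoot.algebraMap_eq]
  linear_combination h

lemma elt_mul (c d w v w' v' : R) :
    elt c d w v * elt c d w' v' =
      elt c d (w * v' + w' * v - c * (w * w')) (v * v' - d * (w * w')) := by
  have h := ysq c d
  simp only [elt, map_add, map_sub, map_mul, map_neg] at h ⊢
  linear_combination (algebraMap R (AdjoinRoot (X ^ 2 + C c * X + C d)) w *
    algebraMap R (AdjoinRoot (X ^ 2 + C c * X + C d)) w') * h

lemma elt_congr {c d : R} {w v w' v' : R} (hw : w = w') (hv : v = v') :
    elt c d w v = elt c d w' v' := by rw [hw, hv]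

lemma degree_quad [Nontrivial R] (c d : R) : (X ^ 2 + C c * X + C d).degree = 2 := by
  compute_degree!

lemma elt_eq_zero [Nontrivial R] {c d w v : R} (h : elt c d w v = 0) : w = 0 ∧ v = 0 := by
  rw [elt_mk, AdjoinRoot.mk_eq_zero] at h
  have hp : C w * X + C v = 0 := by
    by_contra hne
    exact (monic_quad c d).not_dvd_of_degree_lt hne
      (lt_of_le_of_lt (degree_linear_le) (by rw [degree_quad]; norm_num)) h
  constructor
  · have := congrArg (fun p => coeff p 1) hp; simpa using this
  · have := congrArg (fun p => coeff p 0) hp; simpa using this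

lemma elt_inj [Nontrivial R] {c d w v w' v' : R} (h : elt c d w v = elt c d w' v') :
    w = w' ∧ v = v' := by
  have h0 := elt_eq_zero (c := c) (d := d) (w := w - w') (v := v - v')
    (by rw [← elt_sub, h, sub_self])
  exact ⟨sub_eq_zero.mp h0.1, sub_eq_zero.mp h0.2⟩

lemma elt_surjective [Nontrivial R] (c d : R) (z : AdjoinRoot (X ^ 2 + C c * X + C d)) :
    ∃ p : R × R, z = elt c d p.1 p.2 := by
  obtain ⟨q, rfl⟩ := AdjoinRoot.mk_surjective z
  have hq := modByMonic_add_div q (X ^ 2 + C c * X + C d)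
  refine ⟨⟨(q %ₘ (X ^ 2 + C c * X + C d)).coeff 1, (q %ₘ (X ^ 2 + C c * X + C d)).coeff 0⟩, ?_⟩
  rw [elt_mk]
  conv_lhs => rw [← hq]
  rw [map_add, map_mul, AdjoinRoot.mk_self, zero_mul, add_zero]
  congr 1
  exact eq_X_add_C_of_degree_le_one (by
    have := degree_modByMonic_lt q (monic_quad c d)
    rw [degree_quad] at this
    exact Order.le_of_lt_succ (by exact_mod_cast this))

lemma aeval_elt (a b c d w v : R) :
    aeval (elt c d w v) (X ^ 2 + C a * X + C b) =
      elt c d (w * (2 * v - (c * w - a))) (v ^ 2 + a * v + b - d * w ^ 2) := by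
  have hsq : elt c d w v ^ 2 = elt c d w v * elt c d w v := by ring
  rw [map_add, map_add, map_pow, map_mul, aeval_X, aeval_C, aeval_C, hsq,
    elt_mul, algebraMap_eq_elt, elt_mul, algebraMap_eq_elt, elt_add, elt_add]
  exact elt_congr (by ring) (by ring)

lemma aeval_elt_zero {a b c d w v : R} (h1 : 2 * v = c * w - a)
    (h2 : v ^ 2 + a * v + b = d * w ^ 2) :
    aeval (elt c d w v) (X ^ 2 + C a * X + C b) = 0 := by
  rw [aeval_elt, elt_congr (show w * (2 * v - (c * w - a)) = 0 by rw [h1]; ring)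
    (show v ^ 2 + a * v + b - d * w ^ 2 = 0 by rw [h2]; ring)]
  simp [elt]

lemma vsq {a b c d w v : R} (h2 : (2 : R) ∈ nonZeroDivisors R)
    (hdisc : a ^ 2 - 4 * b = w ^ 2 * (c ^ 2 - 4 * d)) (h1 : 2 * v = c * w - a) :
    v ^ 2 + a * v + b = d * w ^ 2 := by
  have h4 : (v ^ 2 + a * v + b - d * w ^ 2) * (2 * 2) = 0 := by
    linear_combination (2 * v + c * w + a) * h1 - hdisc
  have := (mem_nonZeroDivisors_iff_right.mp h2) ((v ^ 2 + a * v + b - d * w ^ 2) * 2) (by linear_combination h4)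
  have := (mem_nonZeroDivisors_iff_right.mp h2) _ this
  linear_combination this

lemma map_elt {S : Type*} [CommRing S] [Algebra R S] (c d w v : R)
    (ψ : AdjoinRoot (X ^ 2 + C c * X + C d) →ₐ[R] S) :
    ψ (elt c d w v) = algebraMap R S w * ψ (root _) + algebraMap R S v := by
  simp only [elt, map_add, map_mul, ← AdjoinRoot.algebraMap_eq, AlgHom.commutes]

lemma map_elt_equiv {S : Type*} [CommRing S] [Algebra R S] (c d w v : R)
    (ψ : AdjoinRoot (X ^ 2 + C c * X + C d) ≃ₐ[R] S) :
    ψ (elt c d w v) = algebraMap R S w * ψ (root _) + algebraMap R S v := by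
  simp only [elt, map_add, map_mul, ← AdjoinRoot.algebraMap_eq, AlgEquiv.commutes]

noncomputable def liftHom (f : R[X]) {S : Type*} [CommRing S] [Algebra R S] (x : S)
    (h : aeval x f = 0) : AdjoinRoot f →ₐ[R] S :=
  liftAlgHom f (Algebra.ofId R S) x h

@[simp] lemma liftHom_root (f : R[X]) {S : Type*} [CommRing S] [Algebra R S] (x : S)
    (h : aeval x f = 0) : liftHom f x h (root f) = x :=
  liftAlgHom_root f (Algebra.ofId R S) x h

noncomputable def equivOf {a b c d w v w' v' : R}
    (h1 : aeval (elt c d w v) (X ^ 2 + C a * X + C b) = 0)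
    (h2 : aeval (elt a b w' v') (X ^ 2 + C c * X + C d) = 0)
    (hww' : w * w' = 1) (hvv' : w * v' + v = 0) :
    AdjoinRoot (X ^ 2 + C a * X + C b) ≃ₐ[R] AdjoinRoot (X ^ 2 + C c * X + C d) :=
  AlgEquiv.ofAlgHom (liftHom _ (elt c d w v) h1) (liftHom _ (elt a b w' v') h2)
    (by
      apply AdjoinRoot.algHom_ext
      rw [AlgHom.comp_apply, liftHom_root, map_elt, liftHom_root, AlgHom.id_apply]
      simp only [elt]
      set ι := algebraMap R (AdjoinRoot (X ^ 2 + C c * X + C d))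
      have H1 : ι w' * ι w = 1 := by
        rw [← map_mul, show w' * w = 1 by linear_combination hww', map_one]
      have H2 : ι w' * ι v + ι v' = 0 := by
        rw [← map_mul, ← map_add,
          show w' * v + v' = 0 by linear_combination w' * hvv' - v' * hww', map_zero]
      linear_combination (root (X ^ 2 + C c * X + C d)) * H1 + H2)
    (by
      apply AdjoinRoot.algHom_ext
      rw [AlgHom.comp_apply, liftHom_root, map_elt, liftHom_root, AlgHom.id_apply]
      simp only [elt]
      set ι := algebraMap R (AdjoinRoot (X ^ 2 + C a * X + C b))
      have H1 : ι w * ι w' = 1 := by rw [← map_mul, hww', map_one]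
      have H2 : ι w * ι v' + ι v = 0 := by rw [← map_mul, ← map_add, hvv', map_zero]
      linear_combination (root (X ^ 2 + C a * X + C b)) * H1 + H2)

lemma equivOf_apply_root {a b c d w v w' v' : R}
    (h1 : aeval (elt c d w v) (X ^ 2 + C a * X + C b) = 0)
    (h2 : aeval (elt a b w' v') (X ^ 2 + C c * X + C d) = 0)
    (hww' : w * w' = 1) (hvv' : w * v' + v = 0) :
    equivOf h1 h2 hww' hvv' (root _) = elt c d w v := by
  simp [equivOf, liftHom_root]

lemma algEquiv_ext {S : Type*} [CommRing S] [Algebra R S] {f : R[X]}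
    {φ ψ : AdjoinRoot f ≃ₐ[R] S} (h : φ (root f) = ψ (root f)) : φ = ψ := by
  have : (φ : AdjoinRoot f →ₐ[R] S) = ψ := AdjoinRoot.algHom_ext h
  exact AlgEquiv.coe_algHom_injective this

lemma props [Nontrivial R] {a b c d w v : R} (h2 : (2 : R) ∈ nonZeroDivisors R)
    (φ : AdjoinRoot (X ^ 2 + C a * X + C b) ≃ₐ[R] AdjoinRoot (X ^ 2 + C c * X + C d))
    (hwv : φ (root _) = elt c d w v) :
    IsUnit w ∧ a ^ 2 - 4 * b = w ^ 2 * (c ^ 2 - 4 * d) ∧ 2 * v = c * w - a := by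
  -- the image of the root is a root
  have h0 : aeval (root (X ^ 2 + C a * X + C b)) (X ^ 2 + C a * X + C b) = 0 := by
    rw [aeval_def, AdjoinRoot.algebraMap_eq]; exact AdjoinRoot.eval₂_root _
  have haev : aeval (elt c d w v) (X ^ 2 + C a * X + C b) = 0 := by
    rw [← hwv, aeval_algHom_apply φ, h0, map_zero]
  rw [aeval_elt] at haev
  obtain ⟨e1, e0⟩ := elt_eq_zero haev
  -- w is a unit
  obtain ⟨⟨w₂, v₂⟩, hsym⟩ := elt_surjective a b (φ.symm (root _))
  have hr : root (X ^ 2 + C c * X + C d) = φ (elt a b w₂ v₂) := by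
    rw [← hsym, AlgEquiv.apply_symm_apply]
  rw [map_elt_equiv, hwv, algebraMap_eq_elt, algebraMap_eq_elt, elt_mul, elt_add,
    root_eq] at hr
  obtain ⟨hww₂, -⟩ := elt_inj hr
  have hww₂' : w * w₂ = 1 := by linear_combination -hww₂
  have hu : IsUnit w := IsUnit.of_mul_eq_one w₂ hww₂'
  have h1 : 2 * v = c * w - a := by linear_combination w₂ * e1 - (2 * v - c * w + a) * hww₂'
  exact ⟨hu, by linear_combination (2 * v + c * w + a) * h1 - 4 * e0, h1⟩

end S13

open S13 in
/-- Let `R` be a commutative ring in which `2` is a nonzerodivisor, and `a, b, c, d ∈ R`.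
There is a bijection between `R`-algebra isomorphisms
`R[x]/⟨x² + ax + b⟩ → R[y]/⟨y² + cy + d⟩` and
`{w ∈ R^× : a² − 4b = w²(c² − 4d) and 2 ∣ (cw − a)}`, sending `φ` to the unique unit
`w` with `φ(x̄) = w·ȳ + v·1` for some `v ∈ R`. -/
theorem stmt_13 (R : Type*) [CommRing R] (h2 : (2 : R) ∈ nonZeroDivisors R) (a b c d : R) :
    ∃ Φ : (AdjoinRoot (X ^ 2 + C a * X + C b) ≃ₐ[R] AdjoinRoot (X ^ 2 + C c * X + C d)) ≃
        {w : R // IsUnit w ∧ a ^ 2 - 4 * b = w ^ 2 * (c ^ 2 - 4 * d) ∧ (2 : R) ∣ (c * w - a)},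
      ∀ φ, ∃ v : R, φ (AdjoinRoot.root _) =
        algebraMap R (AdjoinRoot (X ^ 2 + C c * X + C d)) (Φ φ : R) * AdjoinRoot.root _ +
          algebraMap R (AdjoinRoot (X ^ 2 + C c * X + C d)) v := by
  classical
  obtain hS | hNT := subsingleton_or_nontrivial R
  · -- trivial ring
    haveI : Subsingleton (AdjoinRoot (X ^ 2 + C a * X + C b)) :=
      (AdjoinRoot.mk_surjective).subsingleton
    haveI : Subsingleton (AdjoinRoot (X ^ 2 + C c * X + C d)) :=
      (AdjoinRoot.mk_surjective).subsingleton
    refine ⟨⟨fun _ => ⟨0, IsUnit.of_mul_eq_one (0 : R) (Subsingleton.elim _ _),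
        Subsingleton.elim _ _, ⟨0, Subsingleton.elim _ _⟩⟩,
      fun _ => AlgEquiv.ofAlgHom (liftHom _ 0 (Subsingleton.elim _ _))
        (liftHom _ 0 (Subsingleton.elim _ _))
        (AlgHom.ext fun _ => Subsingleton.elim _ _)
        (AlgHom.ext fun _ => Subsingleton.elim _ _),
      fun φ => algEquiv_ext (Subsingleton.elim _ _),
      fun q => Subtype.ext (Subsingleton.elim _ _)⟩,
      fun φ => ⟨0, Subsingleton.elim _ _⟩⟩
  · set A := AdjoinRoot (X ^ 2 + C a * X + C b) with hA
    set B := AdjoinRoot (X ^ 2 + C c * X + C d) with hB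
    -- coordinates of φ(root)
    have hPspec : ∀ φ : A ≃ₐ[R] B,
        φ (root _) = elt c d (elt_surjective c d (φ (root _))).choose.1
          (elt_surjective c d (φ (root _))).choose.2 :=
      fun φ => (elt_surjective c d (φ (root _))).choose_spec
    set T := {w : R // IsUnit w ∧ a ^ 2 - 4 * b = w ^ 2 * (c ^ 2 - 4 * d) ∧ (2 : R) ∣ (c * w - a)}
      with hT
    have exv : ∀ q : T, ∃ v : R, c * q.1 - a = 2 * v := fun q => q.2.2.2
    have exw : ∀ q : T, ∃ w' : R, q.1 * w' = 1 := fun q => q.2.1.exists_right_inv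
    choose V hV using exv
    choose W hW using exw
    have h1q : ∀ q : T, 2 * V q = c * q.1 - a := fun q => (hV q).symm
    have hAq : ∀ q : T, aeval (elt c d q.1 (V q)) (X ^ 2 + C a * X + C b) = 0 := fun q =>
      aeval_elt_zero (h1q q) (vsq h2 q.2.2.1 (h1q q))
    have h1q' : ∀ q : T, 2 * (-V q * W q) = a * W q - c := fun q => by
      linear_combination W q * hV q - c * hW q
    have hdisc' : ∀ q : T, c ^ 2 - 4 * d = W q ^ 2 * (a ^ 2 - 4 * b) := fun q => by
      linear_combination (-(W q) ^ 2) * q.2.2.1 - (c ^ 2 - 4 * d) * (q.1 * W q + 1) * hW q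
    have hBq : ∀ q : T, aeval (elt a b (W q) (-V q * W q)) (X ^ 2 + C c * X + C d) = 0 :=
      fun q => aeval_elt_zero (h1q' q) (vsq h2 (hdisc' q) (h1q' q))
    have hvv' : ∀ q : T, q.1 * (-V q * W q) + V q = 0 := fun q => by
      linear_combination (-(V q)) * hW q
    have exE : ∀ q : T, ∃ e : A ≃ₐ[R] B, e (root _) = elt c d q.1 (V q) := fun q =>
      ⟨equivOf (hAq q) (hBq q) (hW q) (hvv' q), equivOf_apply_root (hAq q) (hBq q) (hW q) (hvv' q)⟩
    choose fromW fromW_root using exE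
    have claim : ∀ (φ : A ≃ₐ[R] B) (q : T) (v₀ : R),
        φ (root _) = elt c d q.1 v₀ → fromW q = φ := by
      intro φ q v₀ h
      apply algEquiv_ext
      rw [fromW_root, h]
      refine elt_congr rfl ?_
      have ha := (props h2 φ h).2.2
      have hb := h1q q
      have hz := (mem_nonZeroDivisors_iff_right.mp h2) (V q - v₀) (by linear_combination hb - ha)
      linear_combination hz
    refine ⟨⟨fun φ => ⟨(elt_surjective c d (φ (root _))).choose.1, (props h2 φ (hPspec φ)).1,
        (props h2 φ (hPspec φ)).2.1,
        ⟨(elt_surjective c d (φ (root _))).choose.2, (props h2 φ (hPspec φ)).2.2.symm⟩⟩,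
      fromW, ?_, ?_⟩, ?_⟩
    · intro φ
      exact claim φ _ _ (hPspec φ)
    · intro q
      apply Subtype.ext
      have hh := (hPspec (fromW q)).symm.trans (fromW_root q)
      exact (elt_inj hh).1
    · intro φ
      exact ⟨(elt_surjective c d (φ (root _))).choose.2, hPspec φ⟩
end

section
/- Let R be a commutative ring in which 2 is a nonzerodivisor and 2 is either a prime element or a unit, and let a, b, c, d ∈ R. Then there exists an R-algebra isomorphism R[x]/⟨x² + ax + b⟩ ≅ R[y]/⟨y² + cy + d⟩ if and only if there exists a unit w ∈ R with a² − 4b = w²(c² − 4d). -/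
open Polynomial

section Helpers
variable {R : Type*} [CommRing R]

private lemma quad_monic (p q : R) : (X ^ 2 + C p * X + C q).Monic := by
  have h : (X : R[X]) ^ 2 + C p * X + C q = X ^ 2 + (C p * X + C q) := by ring
  rw [h]
  exact Polynomial.monic_X_pow_add (lt_of_le_of_lt Polynomial.degree_linear_le (by norm_num))

private lemma quad_degree [Nontrivial R] (p q : R) : (X ^ 2 + C p * X + C q).degree = 2 := by
  compute_degree!

private lemma quad_root_eq (p q : R) :
    (AdjoinRoot.root (X ^ 2 + C p * X + C q)) ^ 2
      + algebraMap R _ p * AdjoinRoot.root (X ^ 2 + C p * X + C q)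
      + algebraMap R _ q = 0 := by
  have h : aeval (AdjoinRoot.root (X ^ 2 + C p * X + C q)) (X ^ 2 + C p * X + C q) = 0 := by
    rw [AdjoinRoot.aeval_eq, AdjoinRoot.mk_self]
  simp only [map_add, map_mul, map_pow, aeval_X, aeval_C] at h
  exact h

private lemma quad_exists_repr [Nontrivial R] (p q : R)
    (z : AdjoinRoot (X ^ 2 + C p * X + C q)) :
    ∃ t u : R, z = algebraMap R _ t
      + algebraMap R _ u * AdjoinRoot.root (X ^ 2 + C p * X + C q) := by
  obtain ⟨g, rfl⟩ := AdjoinRoot.mk_surjective z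
  set f : R[X] := X ^ 2 + C p * X + C q with hf
  refine ⟨(g %ₘ f).coeff 0, (g %ₘ f).coeff 1, ?_⟩
  have h1 : AdjoinRoot.mk f g = AdjoinRoot.mk f (g %ₘ f) := by
    rw [Polynomial.modByMonic_eq_sub_mul_div g f]
    rw [map_sub, map_mul, AdjoinRoot.mk_self, zero_mul, sub_zero]
  have hdeg : (g %ₘ f).degree < f.degree := Polynomial.degree_modByMonic_lt g (quad_monic p q)
  rw [quad_degree p q] at hdeg
  have hdeg1 : (g %ₘ f).degree ≤ 1 := by
    rcases hd : (g %ₘ f).degree with _ | n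
    · exact bot_le
    · rw [hd] at hdeg
      have h' : (n : WithBot ℕ) < 2 := hdeg
      have hn : n < 2 := by exact_mod_cast h'
      show ((n : ℕ) : WithBot ℕ) ≤ 1
      exact_mod_cast Nat.lt_succ_iff.mp hn
  have h2 := Polynomial.eq_X_add_C_of_degree_le_one hdeg1
  set t : R := (g %ₘ f).coeff 0
  set u : R := (g %ₘ f).coeff 1
  rw [h1, h2, map_add, map_mul, AdjoinRoot.mk_C, AdjoinRoot.mk_C, AdjoinRoot.mk_X,
    AdjoinRoot.algebraMap_eq]
  ring

private lemma quad_repr_zero [Nontrivial R] (p q t u : R)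
    (h : algebraMap R (AdjoinRoot (X ^ 2 + C p * X + C q)) t
        + algebraMap R _ u * AdjoinRoot.root (X ^ 2 + C p * X + C q) = 0) :
    t = 0 ∧ u = 0 := by
  set f : R[X] := X ^ 2 + C p * X + C q with hf
  have hmk : AdjoinRoot.mk f (C u * X + C t) = 0 := by
    rw [AdjoinRoot.algebraMap_eq] at h
    rw [map_add, map_mul, AdjoinRoot.mk_C, AdjoinRoot.mk_C, AdjoinRoot.mk_X]
    linear_combination h
  rw [AdjoinRoot.mk_eq_zero] at hmk
  obtain ⟨k, hk⟩ := hmk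
  have hg0 : C u * X + C t = 0 := by
    by_cases hk0 : k = 0
    · rw [hk, hk0, mul_zero]
    · exfalso
      have hdeg : (C u * X + C t).degree = k.degree + f.degree := by
        rw [hk, mul_comm]; exact (quad_monic p q).degree_mul
      have h2d : f.degree = 2 := quad_degree p q
      have hk0' : (0 : WithBot ℕ) ≤ k.degree := Polynomial.zero_le_degree_iff.mpr hk0
      have hle : (C u * X + C t).degree ≤ 1 := Polynomial.degree_linear_le
      rw [hdeg, h2d] at hle
      have h2le : (2 : WithBot ℕ) ≤ k.degree + 2 := le_add_of_nonneg_left hk0'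
      have := le_trans h2le hle
      norm_num at this
  constructor
  · have := congrArg (fun g => Polynomial.coeff g 0) hg0; simpa using this
  · have := congrArg (fun g => Polynomial.coeff g 1) hg0; simpa using this

private lemma aeval_comb (p q p' q' u t : R)
    (hc1 : 2 * t * u + p * u - p' * u ^ 2 = 0)
    (hc2 : t ^ 2 + p * t + q - q' * u ^ 2 = 0) :
    aeval (algebraMap R (AdjoinRoot (X ^ 2 + C p' * X + C q')) u
        * AdjoinRoot.root (X ^ 2 + C p' * X + C q')
      + algebraMap R _ t) (X ^ 2 + C p * X + C q : R[X]) = 0 := by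
  have hroot := quad_root_eq p' q'
  have H1 := congrArg (algebraMap R (AdjoinRoot (X ^ 2 + C p' * X + C q'))) hc1
  have H2 := congrArg (algebraMap R (AdjoinRoot (X ^ 2 + C p' * X + C q'))) hc2
  simp only [map_add, map_sub, map_mul, map_pow, map_ofNat, map_zero] at H1 H2
  simp only [map_add, map_mul, map_pow, aeval_X, aeval_C]
  linear_combination (algebraMap R (AdjoinRoot (X ^ 2 + C p' * X + C q')) u) ^ 2 * hroot
    + AdjoinRoot.root (X ^ 2 + C p' * X + C q') * H1 + H2

end Helpers

/-- Let `R` be a commutative ring in which `2` is a nonzerodivisor and `2` is either a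
prime element or a unit. Then `R[x]/⟨x² + ax + b⟩ ≅ R[y]/⟨y² + cy + d⟩` as `R`-algebras
iff there is a unit `w ∈ R` with `a² − 4b = w²(c² − 4d)`. -/
theorem stmt_14 (R : Type*) [CommRing R] (h2 : (2 : R) ∈ nonZeroDivisors R)
    (h2' : Prime (2 : R) ∨ IsUnit (2 : R)) (a b c d : R) :
    Nonempty (AdjoinRoot (X ^ 2 + C a * X + C b) ≃ₐ[R] AdjoinRoot (X ^ 2 + C c * X + C d)) ↔
      ∃ w : Rˣ, a ^ 2 - 4 * b = (w : R) ^ 2 * (c ^ 2 - 4 * d) := by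
  by_cases hR : Subsingleton R
  · have hsub : ∀ p q : R, Subsingleton (AdjoinRoot (X ^ 2 + C p * X + C q)) := by
      intro p q
      refine ⟨fun x y => ?_⟩
      obtain ⟨x', rfl⟩ := AdjoinRoot.mk_surjective x
      obtain ⟨y', rfl⟩ := AdjoinRoot.mk_surjective y
      exact congrArg _ (Subsingleton.elim x' y')
    constructor
    · intro _; exact ⟨1, Subsingleton.elim _ _⟩
    · intro _
      haveI := hsub a b
      haveI := hsub c d
      exact ⟨AlgEquiv.ofAlgHom (AdjoinRoot.liftAlgHom _ (Algebra.ofId R _) 0 (Subsingleton.elim _ _))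
        (AdjoinRoot.liftAlgHom _ (Algebra.ofId R _) 0 (Subsingleton.elim _ _))
        (AlgHom.ext fun x => Subsingleton.elim _ _)
        (AlgHom.ext fun x => Subsingleton.elim _ _)⟩
  rw [not_subsingleton_iff_nontrivial] at hR
  have cancel4 : ∀ x : R, 4 * x = 0 → x = 0 := by
    intro x hx
    have hx2 : x * 2 * 2 = 0 := by linear_combination hx
    exact mem_nonZeroDivisors_iff_right.mp h2 x (mem_nonZeroDivisors_iff_right.mp h2 (x * 2) hx2)
  constructor
  · rintro ⟨e⟩
    have hrootB := quad_root_eq c d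
    obtain ⟨t, u, hz⟩ := quad_exists_repr c d (e (AdjoinRoot.root (X ^ 2 + C a * X + C b)))
    obtain ⟨t', u', hz'⟩ := quad_exists_repr a b (e.symm (AdjoinRoot.root (X ^ 2 + C c * X + C d)))
    have haev : aeval (e (AdjoinRoot.root (X ^ 2 + C a * X + C b)))
        (X ^ 2 + C a * X + C b : R[X]) = 0 := by
      rw [aeval_algHom_apply, AdjoinRoot.aeval_eq, AdjoinRoot.mk_self, map_zero]
    rw [hz] at haev
    simp only [map_add, map_mul, map_pow, aeval_X, aeval_C] at haev
    have key := quad_repr_zero c d (t ^ 2 + a * t + b - d * u ^ 2) (2 * t * u + a * u - c * u ^ 2)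
      (by
        simp only [map_add, map_sub, map_mul, map_pow, map_ofNat]
        linear_combination haev - (algebraMap R (AdjoinRoot (X ^ 2 + C c * X + C d)) u) ^ 2 * hrootB)
    have h0 : algebraMap R (AdjoinRoot (X ^ 2 + C a * X + C b)) t
        + algebraMap R _ u * (algebraMap R _ t' + algebraMap R _ u'
          * AdjoinRoot.root (X ^ 2 + C a * X + C b))
        = AdjoinRoot.root (X ^ 2 + C a * X + C b) := by
      have h0' := e.symm_apply_apply (AdjoinRoot.root (X ^ 2 + C a * X + C b))
      rw [hz, map_add, map_mul, AlgEquiv.commutes, AlgEquiv.commutes, hz'] at h0'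
      exact h0'
    have key2 := quad_repr_zero a b (t + u * t') (u * u' - 1)
      (by
        simp only [map_add, map_sub, map_mul, map_one]
        linear_combination h0)
    have hone : u * u' - 1 = 0 := key2.2
    have hu : IsUnit u := IsUnit.of_mul_eq_one u' (by linear_combination hone)
    refine ⟨hu.unit, ?_⟩
    rw [IsUnit.unit_spec]
    have hcu : 2 * t + a - c * u = 0 := by
      linear_combination u' * key.2 - (2 * t + a - c * u) * hone
    linear_combination (2 * t + a + c * u) * hcu - 4 * key.1
  · rintro ⟨w, hd⟩
    obtain ⟨s, hs⟩ : ∃ s, a - w * c = 2 * s := by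
      rcases h2' with hp | hu
      · have hdvd : (2 : R) ∣ (a - w * c) * (a + w * c) :=
          ⟨2 * (b - w ^ 2 * d), by linear_combination hd⟩
        rcases (hp.2.2 _ _ hdvd) with h | h
        · exact h
        · obtain ⟨k, hk⟩ := h
          exact ⟨k - w * c, by linear_combination hk⟩
      · obtain ⟨v, hv⟩ := hu
        refine ⟨↑v⁻¹ * (a - w * c), ?_⟩
        have h1 : (v : R) * ↑v⁻¹ = 1 := v.mul_inv
        linear_combination ((v⁻¹ : Rˣ) : R) * (a - w * c) * hv - (a - w * c) * h1
    set u : R := ((w⁻¹ : Rˣ) : R) with hu_def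
    have hw : u * w = 1 := w.inv_mul
    have hc1A : 2 * (-s) * (w : R) + a * w - c * w ^ 2 = 0 := by
      linear_combination (w : R) * hs
    have hc2A : (-s) ^ 2 + a * (-s) + b - d * (w : R) ^ 2 = 0 :=
      cancel4 _ (by linear_combination (a + (w : R) * c - 2 * s) * hs - hd)
    have hc1B : 2 * (u * s) * u + c * u - a * u ^ 2 = 0 := by
      linear_combination (-(u ^ 2)) * hs + (-(c * u)) * hw
    have hY : s ^ 2 + c * (w : R) * s + (w : R) ^ 2 * d - b = 0 :=
      cancel4 _ (by linear_combination (-(a - (w : R) * c + 2 * s + 2 * c * w)) * hs + hd)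
    have hc2B : (u * s) ^ 2 + c * (u * s) + d - b * u ^ 2 = 0 := by
      linear_combination u ^ 2 * hY + (-(c * u * s) - d * (1 + (w : R) * u)) * hw
    have hWUa := congrArg (algebraMap R (AdjoinRoot (X ^ 2 + C a * X + C b))) hw
    have hWUb := congrArg (algebraMap R (AdjoinRoot (X ^ 2 + C c * X + C d))) hw
    simp only [map_mul, map_one] at hWUa hWUb
    refine ⟨AlgEquiv.ofAlgHom
      (AdjoinRoot.liftAlgHom _ (Algebra.ofId R _) (algebraMap R _ (w : R)
          * AdjoinRoot.root (X ^ 2 + C c * X + C d) + algebraMap R _ (-s))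
        (aeval_comb a b c d (w : R) (-s) hc1A hc2A))
      (AdjoinRoot.liftAlgHom _ (Algebra.ofId R _) (algebraMap R _ u
          * AdjoinRoot.root (X ^ 2 + C a * X + C b) + algebraMap R _ (u * s))
        (aeval_comb c d a b u (u * s) hc1B hc2B)) ?_ ?_⟩
    · apply AdjoinRoot.algHom_ext
      simp only [AlgHom.coe_comp, Function.comp_apply, AdjoinRoot.liftAlgHom_root, map_add,
        map_mul, map_neg, AlgHom.commutes, AlgHom.coe_id, id_eq]
      linear_combination AdjoinRoot.root (X ^ 2 + C c * X + C d) * hWUb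
    · apply AdjoinRoot.algHom_ext
      simp only [AlgHom.coe_comp, Function.comp_apply, AdjoinRoot.liftAlgHom_root, map_add,
        map_mul, map_neg, AlgHom.commutes, AlgHom.coe_id, id_eq]
      linear_combination (AdjoinRoot.root (X ^ 2 + C a * X + C b)
        + algebraMap R (AdjoinRoot (X ^ 2 + C a * X + C b)) s) * hWUa
end

section
/- Let R = ℤ[√5], i.e. the ring ℤ[t]/⟨t² − 5⟩, and let s denote the class of t. Then the R-algebras A = R[x]/⟨x² + x + 1⟩ and B = R[y]/⟨y² + s·y + 2⟩ have the same discriminant (−3 in both cases: 1² − 4·1 = s² − 4·2 = −3), yet there is no R-algebra isomorphism from A to B. -/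
open Polynomial

/-- Let `R = ℤ[√5] = ℤ[t]/⟨t² − 5⟩` with `s` the class of `t`. The `R`-algebras
`A = R[x]/⟨x² + x + 1⟩` and `B = R[y]/⟨y² + sy + 2⟩` have the same discriminant `−3`
(`1² − 4·1 = s² − 4·2 = −3`), yet they are not isomorphic as `R`-algebras. -/
theorem stmt_15 :
    let R := AdjoinRoot ((X : ℤ[X]) ^ 2 - C 5)
    let s : R := AdjoinRoot.root _
    ((1 : R) ^ 2 - 4 * 1 = -3) ∧ (s ^ 2 - 4 * 2 = -3) ∧
      IsEmpty (AdjoinRoot ((X : R[X]) ^ 2 + X + 1) ≃ₐ[R]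
        AdjoinRoot ((X : R[X]) ^ 2 + C s * X + 2)) := by
  intro R s
  have hs : s ^ 2 = 5 := by
    have h := AdjoinRoot.mk_self (f := (X : ℤ[X]) ^ 2 - C 5)
    have : s ^ 2 - 5 = 0 := by
      simpa [map_sub, map_pow, AdjoinRoot.mk_X, AdjoinRoot.mk_C, s, map_ofNat] using h
    linear_combination this
  refine ⟨by ring, by rw [hs]; ring, ?_⟩
  constructor
  intro e
  -- the root of `x² + x + 1` in `A`
  set f : R[X] := X ^ 2 + X + 1 with hf
  have hroot : (AdjoinRoot.root f) ^ 2 + AdjoinRoot.root f + 1 = 0 := by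
    have h := AdjoinRoot.mk_self (f := f)
    simpa [hf, map_add, map_pow, map_one, AdjoinRoot.mk_X] using h
  set α := e (AdjoinRoot.root f) with hα
  have hα2 : α ^ 2 + α + 1 = 0 := by
    have := congrArg e hroot
    simpa [map_add, map_pow, map_one] using this
  -- map `R` to `ZMod 2` sending `s ↦ 1`
  have hφ : eval₂ (Int.castRingHom (ZMod 2)) (1 : ZMod 2) ((X : ℤ[X]) ^ 2 - C 5) = 0 := by
    simp [eval₂_sub, eval₂_pow, eval₂_X, eval₂_C]
    decide
  set φ : R →+* ZMod 2 := AdjoinRoot.lift (Int.castRingHom (ZMod 2)) 1 hφ with hφdef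
  -- map `B` to `ZMod 2` sending the root to `0`
  have hψ : eval₂ φ (0 : ZMod 2) ((X : R[X]) ^ 2 + C s * X + 2) = 0 := by
    have h2 : (2 : R[X]) = C 2 := by
      rw [← map_ofNat (C : R →+* R[X]) 2]
    rw [h2]
    simp [eval₂_add, eval₂_mul, eval₂_pow, eval₂_X, eval₂_C]
    rw [map_ofNat]
    decide
  set ψ : AdjoinRoot ((X : R[X]) ^ 2 + C s * X + 2) →+* ZMod 2 :=
    AdjoinRoot.lift φ 0 hψ with hψdef
  have hfin : ψ α ^ 2 + ψ α + 1 = 0 := by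
    have := congrArg ψ hα2
    simpa [map_add, map_pow, map_one] using this
  have : ∀ z : ZMod 2, z ^ 2 + z + 1 ≠ 0 := by decide
  exact this (ψ α) hfin
end
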